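/- arXiv:2604.01214 — 6 statements merged into one kernel-verified Lean document; each statement's English description precedes it below -/
import Mathlib

section
/- There exists an absolute constant c > 0 such that for all integers M ≥ 1 and w ≥ 2 and all reals R ≥ 1, the number of distinct w-coarsenings (k^w, k_large, k¹_large) arising from sequences k ∈ 𝔎_M with τ₂(k) ≤ RM is at most exp(c R M (log w) / w²). -/
set_option maxHeartbeats 2000000


noncomputable section

/-- `τ₂` of an integer sequence `k`, summed over `i = 1, …, M`. -/
def tau2 (M : ℕ) (k : ℕ → ℤ) : ℤ :=
  ∑ i ∈ Finset.Icc 1 M, (k i - k (i - 1)) ^ 2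

/-- The coarsened sequence `k^w`: `k^w_i = ⌊k_{i w²} / w³⌋` for `1 ≤ i ≤ ⌊M/w²⌋`
(and `0` outside this range of indices). -/
def coarsenFn (M w : ℕ) (k : ℕ → ℤ) : ℕ → ℤ := fun i =>
  if 1 ≤ i ∧ i ≤ M / w ^ 2 then Int.fdiv (k (i * w ^ 2)) ((w : ℤ) ^ 3) else 0

/-- The set `k_large` of locations `i ∈ {1, …, M}` of jumps of size at least `w`. -/
def largeSet (M w : ℕ) (k : ℕ → ℤ) : Set ℕ :=
  {i | 1 ≤ i ∧ i ≤ M ∧ (w : ℤ) ≤ |k i - k (i - 1)|}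

/-- The set `k¹_large = {k_i : i ∈ k_large or i + 1 ∈ k_large}`. -/
def largeVals (M w : ℕ) (k : ℕ → ℤ) : Set ℤ :=
  {x | ∃ i : ℕ, (i ∈ largeSet M w k ∨ i + 1 ∈ largeSet M w k) ∧ x = k i}

/-- The `w`-coarsening `(k^w, k_large, k¹_large)` of a sequence `k`. -/
def coarsening (M w : ℕ) (k : ℕ → ℤ) : (ℕ → ℤ) × Set ℕ × Set ℤ :=
  (coarsenFn M w k, largeSet M w k, largeVals M w k)


open Finset

theorem countP {α : Type*} [DecidableEq α] (G : Finset α) (t : ℕ) (x : ℝ) (hx0 : 0 < x) (hx1 : x ≤ 1) :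
    (((G.powerset).filter (fun s => s.card ≤ t)).card : ℝ) ≤ (1+x)^G.card / x^t := by
  rw [le_div_iff₀ (by positivity)]
  calc ((filter (fun s => s.card ≤ t) G.powerset).card : ℝ) * x ^ t
      ≤ ∑ s ∈ filter (fun s => s.card ≤ t) G.powerset, x ^ s.card := by
        rw [← nsmul_eq_mul, ← Finset.sum_const]
        exact Finset.sum_le_sum fun s hs => pow_le_pow_of_le_one hx0.le hx1 (mem_filter.mp hs).2
    _ ≤ ∑ s ∈ G.powerset, x ^ s.card :=
        Finset.sum_le_sum_of_subset_of_nonneg (filter_subset _ _) (fun s _ _ => by positivity)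
    _ = (1+x)^G.card := by
        rw [← Finset.prod_const, add_comm (1:ℝ) x, Finset.prod_add]
        exact Finset.sum_congr rfl fun s hs => by
          simp [Finset.prod_const, Finset.prod_const_one]

theorem geoZ (T : ℕ) : ∑ z ∈ Finset.Icc (-(T:ℤ)) T, (2⁻¹:ℝ)^(z.natAbs) ≤ 4 := by
  set A := (Finset.range (T+1)).image (fun (n:ℕ) => (n : ℤ)) with hA
  set B := (Finset.range (T+1)).image (fun (n:ℕ) => -(n : ℤ)) with hB
  have hsub : Finset.Icc (-(T:ℤ)) T ⊆ A ∪ B := by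
    intro z hz
    simp only [Finset.mem_Icc] at hz
    simp only [hA, hB, Finset.mem_union, Finset.mem_image, Finset.mem_range]
    rcases le_or_gt 0 z with h | h
    · exact Or.inl ⟨z.toNat, by omega, by omega⟩
    · exact Or.inr ⟨(-z).toNat, by omega, by omega⟩
  have hAsum : ∑ z ∈ A, (2⁻¹:ℝ)^(z.natAbs) ≤ 2 := by
    rw [hA, Finset.sum_image (by intro a _ b _ h; have h' : (a:ℤ) = b := h; omega)]
    simpa [one_div] using sum_geometric_two_le (T+1)
  have hBsum : ∑ z ∈ B, (2⁻¹:ℝ)^(z.natAbs) ≤ 2 := by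
    rw [hB, Finset.sum_image (by intro a _ b _ h; have h' : -(a:ℤ) = -b := h; omega)]
    simpa [one_div] using sum_geometric_two_le (T+1)
  calc ∑ z ∈ Finset.Icc (-(T:ℤ)) T, (2⁻¹:ℝ)^(z.natAbs)
      ≤ ∑ z ∈ A ∪ B, (2⁻¹:ℝ)^(z.natAbs) :=
        Finset.sum_le_sum_of_subset_of_nonneg hsub (fun z _ _ => by positivity)
    _ ≤ ∑ z ∈ A, (2⁻¹:ℝ)^(z.natAbs) + ∑ z ∈ B, (2⁻¹:ℝ)^(z.natAbs) := by
        have := Finset.sum_union_inter (s₁ := A) (s₂ := B) (f := fun z => (2⁻¹:ℝ)^(z.natAbs))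
        have hnn : (0:ℝ) ≤ ∑ z ∈ A ∩ B, (2⁻¹:ℝ)^(z.natAbs) :=
          Finset.sum_nonneg fun z _ => by positivity
        linarith
    _ ≤ 2 + 2 := by linarith
    _ = 4 := by norm_num

theorem countA (N T : ℕ) :
    ((((Fintype.piFinset (fun _ : Fin N => Finset.Icc (-(T:ℤ)) T)).filter
      (fun d => ∑ i, (d i).natAbs ≤ T)).card : ℝ)) ≤ 2^T * 4^N := by
  set P := Fintype.piFinset (fun _ : Fin N => Finset.Icc (-(T:ℤ)) T) with hP
  set A := P.filter (fun d => ∑ i, (d i).natAbs ≤ T) with hAdef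
  have key : (A.card : ℝ) * (2⁻¹)^T ≤ 4^N := by
    calc (A.card : ℝ) * (2⁻¹)^T
        ≤ ∑ d ∈ A, ∏ i, (2⁻¹:ℝ)^((d i).natAbs) := by
          rw [← nsmul_eq_mul, ← Finset.sum_const]
          refine Finset.sum_le_sum fun d hd => ?_
          rw [Finset.prod_pow_eq_pow_sum]
          exact pow_le_pow_of_le_one (by norm_num) (by norm_num) (mem_filter.mp hd).2
      _ ≤ ∑ d ∈ P, ∏ i, (2⁻¹:ℝ)^((d i).natAbs) :=
          Finset.sum_le_sum_of_subset_of_nonneg (filter_subset _ _) (fun d _ _ => by positivity)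
      _ = ∏ _i : Fin N, ∑ z ∈ Finset.Icc (-(T:ℤ)) T, (2⁻¹:ℝ)^(z.natAbs) := by
          rw [hP]
          exact (Finset.prod_univ_sum (fun _ : Fin N => Finset.Icc (-(T:ℤ)) T)
            (fun _ z => (2⁻¹:ℝ)^(z.natAbs))).symm
      _ ≤ ∏ _i : Fin N, (4:ℝ) := Finset.prod_le_prod (fun _ _ => by positivity) (fun i _ => geoZ T)
      _ = 4^N := by simp
  have h1 : (A.card : ℝ) = (A.card : ℝ) * (2⁻¹)^T * 2^T := by
    rw [mul_assoc, ← mul_pow]; norm_num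
  rw [h1, mul_comm ((2:ℝ)^T) _]
  gcongr

theorem int_abs_le_sq (z : ℤ) : |z| ≤ z^2 := by
  rcases eq_or_ne z 0 with h | h
  · simp [h]
  · have h1 : (1:ℤ) ≤ |z| := Int.one_le_abs h
    calc |z| = |z| * 1 := (mul_one _).symm
      _ ≤ |z| * |z| := by gcongr
      _ = z^2 := by rw [← abs_mul, ← sq, abs_sq]

theorem telescope_Ioc (k : ℕ → ℤ) (a : ℕ) : ∀ b, a ≤ b →
    ∑ j ∈ Finset.Ioc a b, (k j - k (j-1)) = k b - k a := by
  intro b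
  induction b with
  | zero => intro h; interval_cases a; simp
  | succ n ih =>
    intro h
    rcases Nat.lt_or_ge a (n+1) with h' | h'
    · have ha : a ≤ n := by omega
      rw [← Finset.Ioc_union_Ioc_eq_Ioc ha (Nat.le_succ n), Finset.sum_union (by
          simp [Finset.disjoint_left]; omega)]
      rw [ih ha]
      simp
    · have : a = n + 1 := by omega
      subst this
      simp

theorem sumAbs_le_tau2 (M : ℕ) (k : ℕ → ℤ) :
    ∑ j ∈ Finset.Icc 1 M, |k j - k (j-1)| ≤ tau2 M k :=
  Finset.sum_le_sum fun j _ => int_abs_le_sq _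

theorem tau2_nonneg (M : ℕ) (k : ℕ → ℤ) : 0 ≤ tau2 M k :=
  Finset.sum_nonneg fun j _ => sq_nonneg _

theorem valBound (M : ℕ) (k : ℕ → ℤ) (hk0 : k 0 = 0) {i : ℕ} (hi : i ≤ M) :
    |k i| ≤ ∑ j ∈ Finset.Icc 1 M, |k j - k (j-1)| := by
  have h1 : k i = ∑ j ∈ Finset.Ioc 0 i, (k j - k (j-1)) := by
    rw [telescope_Ioc k 0 i (Nat.zero_le i), hk0, sub_zero]
  calc |k i| = |∑ j ∈ Finset.Ioc 0 i, (k j - k (j-1))| := by rw [← h1]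
    _ ≤ ∑ j ∈ Finset.Ioc 0 i, |k j - k (j-1)| := Finset.abs_sum_le_sum_abs _ _
    _ ≤ ∑ j ∈ Finset.Icc 1 M, |k j - k (j-1)| := by
        apply Finset.sum_le_sum_of_subset_of_nonneg
        · intro j hj; simp only [Finset.mem_Ioc] at hj; simp only [Finset.mem_Icc]; omega
        · intro j _ _; exact abs_nonneg _

theorem blocksum (k : ℕ → ℤ) (W : ℕ) : ∀ n : ℕ,
    ∑ i ∈ Finset.range n, |k ((i+1)*W) - k (i*W)| ≤ ∑ j ∈ Finset.Ioc 0 (n*W), |k j - k (j-1)| := by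
  intro n
  induction n with
  | zero => simp
  | succ n ih =>
    rw [Finset.sum_range_succ]
    have hsplit : Finset.Ioc 0 ((n+1)*W) = Finset.Ioc 0 (n*W) ∪ Finset.Ioc (n*W) ((n+1)*W) :=
      (Finset.Ioc_union_Ioc_eq_Ioc (Nat.zero_le _) (by nlinarith)).symm
    rw [hsplit, Finset.sum_union (by simp [Finset.disjoint_left]; omega)]
    gcongr
    calc |k ((n+1)*W) - k (n*W)| = |∑ j ∈ Finset.Ioc (n*W) ((n+1)*W), (k j - k (j-1))| := by
          rw [telescope_Ioc k (n*W) ((n+1)*W) (by nlinarith)]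
      _ ≤ ∑ j ∈ Finset.Ioc (n*W) ((n+1)*W), |k j - k (j-1)| := Finset.abs_sum_le_sum_abs _ _

theorem fdiv_diff (a b c : ℤ) (hc : 0 < c) :
    |a.fdiv c - b.fdiv c| * c ≤ |a - b| + c := by
  rw [Int.fdiv_eq_ediv_of_nonneg a hc.le, Int.fdiv_eq_ediv_of_nonneg b hc.le]
  have ha1 : 0 ≤ a % c := Int.emod_nonneg a (ne_of_gt hc)
  have ha2 : a % c < c := Int.emod_lt_of_pos a hc
  have hb1 : 0 ≤ b % c := Int.emod_nonneg b (ne_of_gt hc)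
  have hb2 : b % c < c := Int.emod_lt_of_pos b hc
  have hae : c * (a / c) = a - a % c := by have := Int.mul_ediv_add_emod a c; omega
  have hbe : c * (b / c) = b - b % c := by have := Int.mul_ediv_add_emod b c; omega
  have key : (a / c - b / c) * c = (a - b) - (a % c - b % c) := by
    rw [sub_mul]; rw [mul_comm (a/c) c, mul_comm (b/c) c, hae, hbe]; ring
  have h1 : |(a / c - b / c) * c| ≤ |a - b| + c := by
    rw [key]
    calc |(a - b) - (a % c - b % c)| ≤ |a - b| + |a % c - b % c| := abs_sub _ _
      _ ≤ |a - b| + c := by gcongr; rw [abs_le]; omega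
  calc |a / c - b / c| * c = |a / c - b / c| * |c| := by rw [abs_of_pos hc]
    _ = |(a / c - b / c) * c| := (abs_mul _ _).symm
    _ ≤ |a - b| + c := h1

def Tn (M w : ℕ) (R : ℝ) : ℕ := ⌊R * M / (w:ℝ)^3 + M / (w:ℝ)^2⌋₊
def tn (M w : ℕ) (R : ℝ) : ℕ := ⌊R * M / (w:ℝ)^2⌋₊
def Bn (M : ℕ) (R : ℝ) : ℕ := ⌊R * M⌋₊

def codeC (M w : ℕ) (R : ℝ) : Finset ((Fin (M / w^2) → ℤ) × Finset ℕ × Finset ℤ) :=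
  ((Fintype.piFinset (fun _ : Fin (M / w^2) => Finset.Icc (-(Tn M w R : ℤ)) (Tn M w R))).filter
      (fun d => ∑ i, (d i).natAbs ≤ Tn M w R)) ×ˢ
    ((((Finset.Icc 1 M).powerset).filter (fun s => s.card ≤ tn M w R)) ×ˢ
    (((Finset.Icc (-(Bn M R : ℤ)) (Bn M R)).powerset).filter (fun v => v.card ≤ 2 * tn M w R)))

def decode (N : ℕ) (c : (Fin N → ℤ) × Finset ℕ × Finset ℤ) : (ℕ → ℤ) × Set ℕ × Set ℤ :=
  (fun j => if 1 ≤ j ∧ j ≤ N then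
      ∑ i ∈ Finset.range j, (if h : i < N then c.1 ⟨i, h⟩ else 0) else 0,
   ↑c.2.1, ↑c.2.2)


theorem exists_code (M w : ℕ) (R : ℝ) (hM : 1 ≤ M) (hw : 2 ≤ w) (hR : 1 ≤ R)
    (k : ℕ → ℤ) (hk0 : k 0 = 0) (hkt : ((tau2 M k : ℤ) : ℝ) ≤ R * M) :
    ∃ c ∈ codeC M w R, decode (M / w^2) c = coarsening M w k := by
  have hw0 : (0:ℝ) < w := by positivity
  have hw2 : (0:ℝ) < (w:ℝ)^2 := by positivity
  have hw3 : (0:ℝ) < (w:ℝ)^3 := by positivity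
  have hw3z : (0:ℤ) < (w:ℤ)^3 := by positivity
  set SA : ℤ := ∑ j ∈ Finset.Icc 1 M, |k j - k (j-1)| with hSA
  have hsumR : ((SA : ℤ) : ℝ) ≤ R * M := by
    calc ((SA : ℤ) : ℝ) ≤ ((tau2 M k : ℤ) : ℝ) := by
          exact_mod_cast sumAbs_le_tau2 M k
      _ ≤ R * M := hkt
  set N := M / w^2 with hN
  set f := coarsenFn M w k with hf0
  have hf : ∀ j : ℕ, j ≤ N → f j = Int.fdiv (k (j * w^2)) ((w:ℤ)^3) := by
    intro j hj
    rcases Nat.eq_zero_or_pos j with h | h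
    · subst h
      simp [hf0, coarsenFn, hk0]
    · rw [hf0]
      unfold coarsenFn
      rw [if_pos ⟨h, hj⟩]
  have hfzero : f 0 = 0 := by simp [hf0, coarsenFn]
  set d : Fin N → ℤ := fun i => f (↑i + 1) - f ↑i with hd
  set s : Finset ℕ := (Finset.Icc 1 M).filter (fun i => (w:ℤ) ≤ |k i - k (i-1)|) with hs
  set v : Finset ℤ := ((Finset.range (M+1)).filter (fun i => i ∈ s ∨ i + 1 ∈ s)).image k with hv
  have hscard : (s.card : ℝ) * (w:ℝ)^2 ≤ R * M := by
    have h1 : (s.card : ℤ) * (w:ℤ)^2 ≤ tau2 M k := by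
      calc (s.card : ℤ) * (w:ℤ)^2 = ∑ _i ∈ s, (w:ℤ)^2 := by
            rw [Finset.sum_const, nsmul_eq_mul]
        _ ≤ ∑ i ∈ s, (k i - k (i-1))^2 := by
            refine Finset.sum_le_sum fun i hi => ?_
            have hwi : (w:ℤ) ≤ |k i - k (i-1)| := (Finset.mem_filter.mp hi).2
            calc (w:ℤ)^2 ≤ |k i - k (i-1)|^2 := by
                  apply pow_le_pow_left₀ (by positivity) hwi
              _ = (k i - k (i-1))^2 := sq_abs _
        _ ≤ tau2 M k := by
            apply Finset.sum_le_sum_of_subset_of_nonneg (Finset.filter_subset _ _)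
            intro i _ _; positivity
    calc (s.card : ℝ) * (w:ℝ)^2 = (((s.card : ℤ) * (w:ℤ)^2 : ℤ) : ℝ) := by push_cast; ring
      _ ≤ ((tau2 M k : ℤ) : ℝ) := by exact_mod_cast h1
      _ ≤ R * M := hkt
  have hscard' : s.card ≤ tn M w R := by
    apply Nat.le_floor
    rw [le_div_iff₀ hw2]
    exact hscard
  have hval : ∀ i : ℕ, i ≤ M → -(Bn M R : ℤ) ≤ k i ∧ k i ≤ (Bn M R : ℤ) := by
    intro i hi
    have h1 : ((|k i| : ℤ) : ℝ) ≤ R * M := by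
      calc ((|k i| : ℤ) : ℝ) ≤ ((SA : ℤ) : ℝ) := by
            exact_mod_cast valBound M k hk0 hi
        _ ≤ R * M := hsumR
    have h2 : |k i|.toNat ≤ Bn M R := by
      apply Nat.le_floor
      calc ((|k i|.toNat : ℕ) : ℝ) = ((|k i| : ℤ) : ℝ) := by
            exact_mod_cast congrArg (Int.cast : ℤ → ℝ) (Int.toNat_of_nonneg (abs_nonneg (k i)))
        _ ≤ R * M := h1
    have h3 : |k i| ≤ (Bn M R : ℤ) := by
      calc |k i| = (|k i|.toNat : ℤ) := (Int.toNat_of_nonneg (abs_nonneg _)).symm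
        _ ≤ (Bn M R : ℤ) := by exact_mod_cast h2
    constructor
    · linarith [(abs_le.mp h3).1]
    · exact (abs_le.mp h3).2
  have hdsum : ∑ i : Fin N, (d i).natAbs ≤ Tn M w R := by
    have key : (∑ i : Fin N, (d i).natAbs : ℤ) * (w:ℤ)^3 ≤ SA + N * (w:ℤ)^3 := by
      have h1 : ∀ i : Fin N, |d i| * (w:ℤ)^3 ≤
          |k ((↑i+1) * w^2) - k (↑i * w^2)| + (w:ℤ)^3 := by
        intro i
        have hi1 : (↑i + 1 : ℕ) ≤ N := i.isLt
        have hi0 : (↑i : ℕ) ≤ N := le_of_lt i.isLt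
        have hde : d i = (k ((↑i+1) * w^2)).fdiv ((w:ℤ)^3) - (k (↑i * w^2)).fdiv ((w:ℤ)^3) := by
          rw [hd]; dsimp only; rw [hf _ hi1, hf _ hi0]
        rw [hde]
        exact fdiv_diff _ _ _ hw3z
      calc (∑ i : Fin N, (d i).natAbs : ℤ) * (w:ℤ)^3
          = ∑ i : Fin N, |d i| * (w:ℤ)^3 := by
            rw [← Finset.sum_mul]
            congr 1
            push_cast [Int.natCast_natAbs]
            rfl
        _ ≤ ∑ i : Fin N, (|k ((↑i+1) * w^2) - k (↑i * w^2)| + (w:ℤ)^3) :=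
            Finset.sum_le_sum fun i _ => h1 i
        _ = (∑ i ∈ Finset.range N, |k ((i+1) * w^2) - k (i * w^2)|) + N * (w:ℤ)^3 := by
            rw [Finset.sum_add_distrib]
            congr 1
            · exact Fin.sum_univ_eq_sum_range (fun i => |k ((i+1) * w^2) - k (i * w^2)|) N
            · simp [mul_comm]
        _ ≤ (∑ j ∈ Finset.Ioc 0 (N * w^2), |k j - k (j-1)|) + N * (w:ℤ)^3 := by
            gcongr
            exact blocksum k (w^2) N
        _ ≤ SA + N * (w:ℤ)^3 := by
            rw [hSA]
            gcongr
            intro j hj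
            simp only [Finset.mem_Ioc] at hj
            simp only [Finset.mem_Icc]
            have : N * w^2 ≤ M := Nat.div_mul_le_self M (w^2)
            omega
    apply Nat.le_floor
    have hNle : (N : ℝ) ≤ M / (w:ℝ)^2 := by
      rw [hN]
      exact_mod_cast Nat.cast_div_le
    have h2 : ((∑ i : Fin N, (d i).natAbs : ℕ) : ℝ) * (w:ℝ)^3 ≤ R * M + N * (w:ℝ)^3 := by
      have hcast : ((∑ i : Fin N, (d i).natAbs : ℕ) : ℝ) * (w:ℝ)^3 =
          (((∑ i : Fin N, (d i).natAbs : ℤ) * (w:ℤ)^3 : ℤ) : ℝ) := by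
            push_cast [Nat.cast_natAbs]
            ring
      rw [hcast]
      calc (((∑ i : Fin N, (d i).natAbs : ℤ) * (w:ℤ)^3 : ℤ) : ℝ)
          ≤ ((SA + N * (w:ℤ)^3 : ℤ) : ℝ) := by exact_mod_cast key
        _ ≤ R * M + N * (w:ℝ)^3 := by push_cast; linarith [hsumR]
    have hD : R * M / (w:ℝ)^3 * (w:ℝ)^3 = R * M := div_mul_cancel₀ _ (ne_of_gt hw3)
    have h3 : ((∑ i : Fin N, (d i).natAbs : ℕ) : ℝ) ≤ R * M / (w:ℝ)^3 + (N:ℝ) := by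
      nlinarith [h2, hD, hw3]
    linarith [hNle, h3]
  
  have hvsub : v ⊆ Finset.Icc (-(Bn M R : ℤ)) (Bn M R) := by
    intro x hx
    obtain ⟨i, hi, rfl⟩ := Finset.mem_image.mp hx
    have hiM : i ≤ M := by
      have := (Finset.mem_filter.mp hi).1
      simp only [Finset.mem_range] at this
      omega
    rw [Finset.mem_Icc]
    exact hval i hiM
  have hvcard : v.card ≤ 2 * tn M w R := by
    calc v.card ≤ ((Finset.range (M+1)).filter (fun i => i ∈ s ∨ i + 1 ∈ s)).card :=
          Finset.card_image_le
      _ ≤ ((Finset.range (M+1)).filter (fun i => i ∈ s)).card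
          + ((Finset.range (M+1)).filter (fun i => i + 1 ∈ s)).card := by
          rw [Finset.filter_or]
          exact Finset.card_union_le _ _
      _ ≤ s.card + s.card := by
          have hA : ((Finset.range (M+1)).filter (fun i => i ∈ s)).card ≤ s.card :=
            Finset.card_le_card (fun i hi => (Finset.mem_filter.mp hi).2)
          have hB : ((Finset.range (M+1)).filter (fun i => i + 1 ∈ s)).card ≤ s.card := by
            apply Finset.card_le_card_of_injOn (fun i => i + 1)
            · intro i hi; exact (Finset.mem_filter.mp hi).2
            · intro a _ b _ h; simpa using h
          omega
      _ ≤ 2 * tn M w R := by rw [two_mul]; exact Nat.add_le_add hscard' hscard'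
  have hC2 : (↑s : Set ℕ) = largeSet M w k := by
    ext i
    simp only [hs, Finset.coe_filter, Finset.mem_Icc, largeSet, Set.mem_setOf_eq]
    tauto
  have hmem : ∀ i : ℕ, i ∈ s ↔ i ∈ largeSet M w k := by
    intro i
    rw [← hC2, Finset.mem_coe]
  refine ⟨⟨d, s, v⟩, ?_, ?_⟩
  · rw [codeC, Finset.mem_product]
    refine ⟨?_, ?_⟩
    · rw [Finset.mem_filter]
      refine ⟨?_, hdsum⟩
      rw [Fintype.mem_piFinset]
      intro i
      rw [Finset.mem_Icc]
      have h := Finset.single_le_sum (f := fun i : Fin N => (d i).natAbs)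
        (fun i _ => Nat.zero_le _) (Finset.mem_univ i)
      have hTi : (d i).natAbs ≤ Tn M w R := le_trans h hdsum
      have habs : |d i| ≤ (Tn M w R : ℤ) := by
        rw [Int.abs_eq_natAbs]
        exact_mod_cast hTi
      exact abs_le.mp habs
    · rw [Finset.mem_product]
      constructor
      · rw [Finset.mem_filter, Finset.mem_powerset]
        exact ⟨Finset.filter_subset _ _, hscard'⟩
      · rw [Finset.mem_filter, Finset.mem_powerset]
        exact ⟨hvsub, hvcard⟩
  · unfold decode coarsening
    refine Prod.ext ?_ (Prod.ext ?_ ?_)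
    · show (fun j => if 1 ≤ j ∧ j ≤ N then
          ∑ i ∈ Finset.range j, (if h : i < N then d ⟨i, h⟩ else 0) else 0) = coarsenFn M w k
      funext j
      by_cases hj : 1 ≤ j ∧ j ≤ N
      · rw [if_pos hj]
        have hsum : ∑ i ∈ Finset.range j, (if h : i < N then d ⟨i, h⟩ else 0)
            = ∑ i ∈ Finset.range j, (f (i + 1) - f i) := by
          refine Finset.sum_congr rfl fun i hi => ?_
          have hiN : i < N := lt_of_lt_of_le (Finset.mem_range.mp hi) hj.2
          rw [dif_pos hiN]
        rw [hsum, Finset.sum_range_sub f j, hfzero, sub_zero]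
      · rw [if_neg hj]
        simp only [coarsenFn]
        rw [if_neg hj]
    · exact hC2
    · show (↑v : Set ℤ) = largeVals M w k
      ext x
      simp only [hv, Finset.coe_image, Set.mem_image, Finset.mem_coe, Finset.mem_filter,
        Finset.mem_range, largeVals, Set.mem_setOf_eq]
      constructor
      · rintro ⟨i, ⟨hiM, hor⟩, rfl⟩
        exact ⟨i, by rw [← hmem, ← hmem]; exact hor, rfl⟩
      · rintro ⟨i, hor, rfl⟩
        refine ⟨i, ⟨?_, by rw [hmem, hmem]; exact hor⟩, rfl⟩
        rcases hor with h | h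
        · have := h.2.1; omega
        · have := h.2.1; omega

/-- Lemma C.3: the number of distinct `w`-coarsenings of sequences
`k ∈ 𝔎_M` with `τ₂(k) ≤ RM` is at most `exp(c R M log w / w²)`. -/
theorem statement4 : ∃ c : ℝ, 0 < c ∧
    ∀ (M w : ℕ) (R : ℝ), 1 ≤ M → 2 ≤ w → 1 ≤ R →
      (coarsening M w '' {k : ℕ → ℤ | k 0 = 0 ∧ ((tau2 M k : ℤ) : ℝ) ≤ R * M}).Finite ∧
      ((coarsening M w '' {k : ℕ → ℤ | k 0 = 0 ∧ ((tau2 M k : ℤ) : ℝ) ≤ R * M}).ncard : ℝ) ≤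
        Real.exp (c * R * M * Real.log w / w ^ 2) := by
  refine ⟨100, by norm_num, ?_⟩
  intro M w R hM hw hR
  have hw0 : (0:ℝ) < w := by positivity
  have hw1 : (1:ℝ) ≤ w := by exact_mod_cast le_trans (by norm_num) hw
  have hw2 : (0:ℝ) < (w:ℝ)^2 := by positivity
  set L := Real.log w with hLdef
  have hL2 : Real.log 2 ≤ L := Real.log_le_log (by norm_num) (by exact_mod_cast hw)
  have hLhalf : (1/2:ℝ) ≤ L := by
    have := Real.log_two_gt_d9
    linarith
  have hLpos : 0 < L := lt_of_lt_of_le (by norm_num) hLhalf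
  set N := M / w^2 with hN
  set T := Tn M w R with hT
  set t := tn M w R with ht
  set B := Bn M R with hB
  clear_value T t B
  set x : ℝ := ((w:ℝ)^2)⁻¹ with hx
  have hx0 : 0 < x := by positivity
  have hx1 : x ≤ 1 := by
    rw [hx]
    rw [inv_le_one_iff₀]
    right
    nlinarith
  set y : ℝ := R * M / (w:ℝ)^2 with hy
  have hy0 : 0 ≤ y := by positivity
  -- subset into decoded codes
  have hsub : coarsening M w '' {k : ℕ → ℤ | k 0 = 0 ∧ ((tau2 M k : ℤ) : ℝ) ≤ R * M} ⊆
      decode N '' ↑(codeC M w R) := by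
    rintro _ ⟨k, ⟨hk0, hkt⟩, rfl⟩
    obtain ⟨c, hc, hdec⟩ := exists_code M w R hM hw hR k hk0 hkt
    exact ⟨c, Finset.mem_coe.mpr hc, hdec⟩
  have hfinT : (decode N '' ↑(codeC M w R)).Finite := ((codeC M w R).finite_toSet).image _
  have hfin : (coarsening M w '' {k : ℕ → ℤ | k 0 = 0 ∧ ((tau2 M k : ℤ) : ℝ) ≤ R * M}).Finite :=
    hfinT.subset hsub
  refine ⟨hfin, ?_⟩
  -- cardinality chain
  have hcard1 : (coarsening M w '' {k : ℕ → ℤ | k 0 = 0 ∧ ((tau2 M k : ℤ) : ℝ) ≤ R * M}).ncard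
      ≤ (codeC M w R).card := by
    calc (coarsening M w '' {k : ℕ → ℤ | k 0 = 0 ∧ ((tau2 M k : ℤ) : ℝ) ≤ R * M}).ncard
        ≤ (decode N '' ↑(codeC M w R)).ncard := Set.ncard_le_ncard hsub hfinT
      _ ≤ ((codeC M w R : Finset ((Fin N → ℤ) × Finset ℕ × Finset ℤ)) : Set ((Fin N → ℤ) × Finset ℕ × Finset ℤ)).ncard :=
          Set.ncard_image_le ((codeC M w R).finite_toSet)
      _ = (codeC M w R).card := Set.ncard_coe_finset (codeC M w R)
  -- card of product
  have hprod : ((codeC M w R).card : ℝ) =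
      (((Fintype.piFinset (fun _ : Fin N => Finset.Icc (-(T:ℤ)) T)).filter
        (fun d => ∑ i, (d i).natAbs ≤ T)).card : ℝ) *
      (((((Finset.Icc 1 M).powerset).filter (fun s => s.card ≤ t)).card : ℝ) *
      ((((Finset.Icc (-(B:ℤ)) B).powerset).filter (fun v => v.card ≤ 2*t)).card : ℝ)) := by
    rw [hT, ht, hB, codeC, Finset.card_product, Finset.card_product]
    push_cast
    ring
  -- ground set sizes
  have hIccM : (Finset.Icc 1 M).card = M := by
    rw [Nat.card_Icc]
    simp
  have hIccB : (Finset.Icc (-(B:ℤ)) B).card = 2*B+1 := by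
    have h1 : ((B:ℤ)+1 - -(B:ℤ)) = ((2*B+1 : ℕ) : ℤ) := by push_cast; ring
    rw [Int.card_Icc, h1, Int.toNat_natCast]
  
  -- numeric facts
  have hM1 : (1:ℝ) ≤ (M:ℝ) := by exact_mod_cast hM
  have hRM1 : (1:ℝ) ≤ R * M := by nlinarith
  have hyx : y = R * M * x := by rw [hy, hx]; ring
  have hTle : (T:ℝ) ≤ 2*y := by
    have h0 : (T:ℝ) ≤ R * M / (w:ℝ)^3 + M / (w:ℝ)^2 := by
      rw [hT]; exact Nat.floor_le (by positivity)
    have h1 : R*M/(w:ℝ)^3 ≤ R*M/(w:ℝ)^2 := by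
      apply div_le_div_of_nonneg_left (by positivity) (by positivity)
      nlinarith
    have h2 : (M:ℝ)/(w:ℝ)^2 ≤ R*M/(w:ℝ)^2 := by
      gcongr
      nlinarith
    rw [hy]
    linarith
  have hNy : (N:ℝ) ≤ y := by
    have h := Nat.cast_div_le (α := ℝ) (m := M) (n := w^2)
    rw [hN, hy]
    push_cast at h
    calc ((M / w^2 : ℕ) : ℝ) ≤ (M:ℝ) / (w:ℝ)^2 := h
      _ ≤ R * M / (w:ℝ)^2 := by gcongr; nlinarith
  have hty : (t:ℝ) ≤ y := by
    rw [ht, hy]; exact Nat.floor_le (by positivity)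
  have hBy : (B:ℝ) ≤ R*M := by
    rw [hB]; exact Nat.floor_le (by positivity)
  have hMx : (M:ℝ)*x ≤ y := by
    rw [hyx]; nlinarith
  have hn3x : ((2*B+1:ℕ):ℝ)*x ≤ 3*y := by
    have h1 : ((2*B+1:ℕ):ℝ) ≤ 3*(R*M) := by push_cast; nlinarith
    rw [hyx]; nlinarith
  have htL : (t:ℝ)*L ≤ y*L := mul_le_mul_of_nonneg_right hty hLpos.le
  have hyL0 : 0 ≤ y*L := mul_nonneg hy0 hLpos.le
  have hy2 : y ≤ 2*(y*L) := by nlinarith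
  -- exponential bounds
  have hexp2 : (2:ℝ) ≤ Real.exp 1 := by
    have := Real.exp_one_gt_d9
    linarith
  have e1 : (2:ℝ)^T * 4^N ≤ Real.exp ((T:ℝ) + (N:ℝ)*2) := by
    have a1 : (2:ℝ)^T ≤ Real.exp T := by
      calc (2:ℝ)^T ≤ (Real.exp 1)^T := pow_le_pow_left₀ (by norm_num) hexp2 T
        _ = Real.exp T := by rw [← Real.exp_nat_mul, mul_one]
    have a2 : (4:ℝ)^N ≤ Real.exp ((N:ℝ)*2) := by
      have h4 : (4:ℝ) ≤ Real.exp 2 := by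
        have : Real.exp 2 = Real.exp 1 * Real.exp 1 := by
          rw [← Real.exp_add]; norm_num
        nlinarith [Real.exp_pos 1]
      calc (4:ℝ)^N ≤ (Real.exp 2)^N := pow_le_pow_left₀ (by norm_num) h4 N
        _ = Real.exp ((N:ℝ)*2) := by rw [← Real.exp_nat_mul, mul_comm]
    calc (2:ℝ)^T * 4^N ≤ Real.exp T * Real.exp ((N:ℝ)*2) := by
          apply mul_le_mul a1 a2 (by positivity) (Real.exp_pos _).le
      _ = Real.exp ((T:ℝ) + (N:ℝ)*2) := (Real.exp_add _ _).symm
  have c1 : ∀ n : ℕ, (1+x)^n ≤ Real.exp ((n:ℝ)*x) := by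
    intro n
    calc (1+x)^n ≤ (Real.exp x)^n :=
          pow_le_pow_left₀ (by positivity) (by linarith [Real.add_one_le_exp x]) n
      _ = Real.exp ((n:ℝ)*x) := (Real.exp_nat_mul x n).symm
  have hwpow : ∀ m : ℕ, ((w:ℝ)^2)^m = Real.exp ((m:ℝ)*(2*L)) := by
    intro m
    have hlog : Real.log ((w:ℝ)^2) = 2*L := by
      rw [Real.log_pow]; push_cast; ring
    conv_lhs => rw [← Real.exp_log hw2]
    rw [← Real.exp_nat_mul, hlog]
  have e2 : (1+x)^M / x^t ≤ Real.exp ((M:ℝ)*x + (t:ℝ)*(2*L)) := by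
    calc (1+x)^M / x^t = (1+x)^M * ((w:ℝ)^2)^t := by
          rw [div_eq_mul_inv, ← inv_pow, hx, inv_inv]
      _ ≤ Real.exp ((M:ℝ)*x) * Real.exp ((t:ℝ)*(2*L)) := by
          rw [hwpow t]
          exact mul_le_mul_of_nonneg_right (c1 M) (Real.exp_pos _).le
      _ = Real.exp ((M:ℝ)*x + (t:ℝ)*(2*L)) := (Real.exp_add _ _).symm
  have e3 : (1+x)^(2*B+1) / x^(2*t) ≤
      Real.exp (((2*B+1:ℕ):ℝ)*x + ((2*t:ℕ):ℝ)*(2*L)) := by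
    calc (1+x)^(2*B+1) / x^(2*t) = (1+x)^(2*B+1) * ((w:ℝ)^2)^(2*t) := by
          rw [div_eq_mul_inv, ← inv_pow, hx, inv_inv]
      _ ≤ Real.exp (((2*B+1:ℕ):ℝ)*x) * Real.exp (((2*t:ℕ):ℝ)*(2*L)) := by
          rw [hwpow (2*t)]
          exact mul_le_mul_of_nonneg_right (c1 (2*B+1)) (Real.exp_pos _).le
      _ = Real.exp (((2*B+1:ℕ):ℝ)*x + ((2*t:ℕ):ℝ)*(2*L)) := (Real.exp_add _ _).symm
  -- the three counting bounds
  have p1 : (((Fintype.piFinset (fun _ : Fin N => Finset.Icc (-(T:ℤ)) T)).filter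
      (fun d => ∑ i, (d i).natAbs ≤ T)).card : ℝ) ≤ 2^T * 4^N := countA N T
  have p2 : (((((Finset.Icc 1 M).powerset).filter (fun s => s.card ≤ t)).card : ℝ))
      ≤ (1+x)^M / x^t := by
    have := countP (Finset.Icc 1 M) t x hx0 hx1
    rwa [hIccM] at this
  have p3 : ((((Finset.Icc (-(B:ℤ)) B).powerset).filter (fun v => v.card ≤ 2*t)).card : ℝ)
      ≤ (1+x)^(2*B+1) / x^(2*t) := by
    have := countP (Finset.Icc (-(B:ℤ)) B) (2*t) x hx0 hx1
    rwa [hIccB] at this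
  -- final chain
  calc ((coarsening M w '' {k : ℕ → ℤ | k 0 = 0 ∧ ((tau2 M k : ℤ) : ℝ) ≤ R * M}).ncard : ℝ)
      ≤ ((codeC M w R).card : ℝ) := by exact_mod_cast hcard1
    _ = _ := hprod
    _ ≤ Real.exp ((T:ℝ) + (N:ℝ)*2) *
        (Real.exp ((M:ℝ)*x + (t:ℝ)*(2*L)) *
         Real.exp (((2*B+1:ℕ):ℝ)*x + ((2*t:ℕ):ℝ)*(2*L))) := by
        apply mul_le_mul (le_trans p1 e1)
        · apply mul_le_mul (le_trans p2 e2) (le_trans p3 e3) (by positivity) (Real.exp_pos _).le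
        · positivity
        · exact (Real.exp_pos _).le
    _ = Real.exp (((T:ℝ) + (N:ℝ)*2) + (((M:ℝ)*x + (t:ℝ)*(2*L))
          + (((2*B+1:ℕ):ℝ)*x + ((2*t:ℕ):ℝ)*(2*L)))) := by
        rw [← Real.exp_add, ← Real.exp_add]
    _ ≤ Real.exp (100 * R * M * L / w ^ 2) := by
        apply Real.exp_le_exp.mpr
        have hrhs : 100 * R * (M:ℝ) * L / (w:ℝ) ^ 2 = 100*(y*L) := by rw [hy]; ring
        rw [hrhs]
        have ht2L : (t:ℝ)*(2*L) ≤ 2*(y*L) := by nlinarith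
        have h4tL : ((2*t:ℕ):ℝ)*(2*L) ≤ 4*(y*L) := by push_cast; nlinarith
        linarith

end
end

section
/- Let K ≥ 1 be an integer, H > 0 a real, and ε ∈ (0,1). There exist δ > 0 and c > 0, depending only on ε, K and H, such that the following holds for every integer Φ ≥ 1. Suppose (B_{i,k})_{1 ≤ i ≤ Φ, k ∈ ℤ} are events on a probability space such that: (i) ℙ[B_{i,k}] ≤ δ for all i and k; and (ii) for every subset I ⊆ {1, …, Φ} whose elements are pairwise at distance at least K from each other, the σ-algebras σ({B_{i,k} : k ∈ ℤ}), for i ∈ I, are mutually independent. Then for all k_s, k_e ∈ ℤ, ℙ[ there exists k ∈ 𝔎_{Φ,k_s,k_e} with τ₁(k) ≤ HΦ and Σ_{i=1}^Φ 1_{B_{i, k_{i−1}}} ≥ εΦ ] ≤ exp(−cΦ). -/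
open MeasureTheory ProbabilityTheory

section Aux
open Finset

lemma aux_geom (A : Finset ℕ) : ∑ n ∈ A, ((1:ℝ)/2)^n ≤ 2 := by
  calc ∑ n ∈ A, ((1:ℝ)/2)^n ≤ ∑ n ∈ Finset.range (A.sup id + 1), ((1:ℝ)/2)^n := by
        apply Finset.sum_le_sum_of_subset_of_nonneg
        · intro n hn
          exact Finset.mem_range.mpr (Nat.lt_succ_of_le (Finset.le_sup (f := id) hn))
        · intro n _ _; positivity
    _ ≤ 2 := sum_geometric_two_le _

lemma aux_abs (s : Finset ℤ) (h : ∀ x ∈ s, ∀ y ∈ s, x.natAbs = y.natAbs → x = y) :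
    ∑ t ∈ s, ((1:ℝ)/2)^t.natAbs ≤ 2 := by
  rw [show (∑ t ∈ s, ((1:ℝ)/2)^t.natAbs) = ∑ n ∈ s.image Int.natAbs, ((1:ℝ)/2)^n from
    (Finset.sum_image h).symm]
  exact aux_geom _

lemma aux_coord (M : ℕ) : ∑ t ∈ Finset.Icc (-(M:ℤ)) M, ((1:ℝ)/2)^t.natAbs ≤ 4 := by
  have hsplit : Finset.Icc (-(M:ℤ)) M = Finset.Ico (-(M:ℤ)) 0 ∪ Finset.Icc 0 M := by
    ext t
    simp only [Finset.mem_Icc, Finset.mem_Ico, Finset.mem_union]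
    omega
  have hdisj : Disjoint (Finset.Ico (-(M:ℤ)) 0) (Finset.Icc 0 (M:ℤ)) := by
    rw [Finset.disjoint_left]
    intro t ht ht'
    simp only [Finset.mem_Ico, Finset.mem_Icc] at ht ht'
    omega
  rw [hsplit, Finset.sum_union hdisj]
  have h1 : ∑ t ∈ Finset.Ico (-(M:ℤ)) 0, ((1:ℝ)/2)^t.natAbs ≤ 2 := by
    apply aux_abs
    intro x hx y hy hxy
    simp only [Finset.mem_Ico] at hx hy
    omega
  have h2 : ∑ t ∈ Finset.Icc (0:ℤ) M, ((1:ℝ)/2)^t.natAbs ≤ 2 := by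
    apply aux_abs
    intro x hx y hy hxy
    simp only [Finset.mem_Icc] at hx hy
    omega
  linarith

lemma aux_countD (Φ M : ℕ) :
    ((((Fintype.piFinset fun _ : Fin Φ => Finset.Icc (-(M:ℤ)) (M:ℤ)).filter
      (fun d => ∑ j, (d j).natAbs ≤ M)).card : ℝ)) ≤ 2^M * 4^Φ := by
  classical
  set D := ((Fintype.piFinset fun _ : Fin Φ => Finset.Icc (-(M:ℤ)) (M:ℤ)).filter
      (fun d => ∑ j, (d j).natAbs ≤ M)) with hD
  have key : (D.card : ℝ) * ((1:ℝ)/2)^M ≤ 4^Φ := by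
    have h1 : (D.card : ℝ) * ((1:ℝ)/2)^M = ∑ _d ∈ D, ((1:ℝ)/2)^M := by
      rw [Finset.sum_const, nsmul_eq_mul]
    rw [h1]
    have h2 : ∀ d ∈ D, ((1:ℝ)/2)^M ≤ ∏ j, ((1:ℝ)/2)^(d j).natAbs := by
      intro d hd
      rw [Finset.prod_pow_eq_pow_sum]
      apply pow_le_pow_of_le_one (by norm_num) (by norm_num)
      exact (Finset.mem_filter.mp hd).2
    calc ∑ _d ∈ D, ((1:ℝ)/2)^M ≤ ∑ d ∈ D, ∏ j, ((1:ℝ)/2)^(d j).natAbs :=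
          Finset.sum_le_sum h2
      _ ≤ ∑ d ∈ (Fintype.piFinset fun _ : Fin Φ => Finset.Icc (-(M:ℤ)) (M:ℤ)),
            ∏ j, ((1:ℝ)/2)^(d j).natAbs := by
          apply Finset.sum_le_sum_of_subset_of_nonneg (Finset.filter_subset _ _)
          intro d _ _; positivity
      _ = ∏ _j : Fin Φ, ∑ t ∈ Finset.Icc (-(M:ℤ)) (M:ℤ), ((1:ℝ)/2)^t.natAbs := by
          rw [Finset.prod_univ_sum]
      _ ≤ ∏ _j : Fin Φ, (4:ℝ) := by
          apply Finset.prod_le_prod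
          · intro j _; positivity
          · intro j _; exact aux_coord M
      _ = 4^Φ := by simp
  have hone : ((1:ℝ)/2)^M * 2^M = 1 := by
    rw [← mul_pow]; norm_num
  calc (D.card : ℝ) = (D.card : ℝ) * (((1:ℝ)/2)^M * 2^M) := by rw [hone, mul_one]
    _ = ((D.card : ℝ) * ((1:ℝ)/2)^M) * 2^M := by ring
    _ ≤ 4^Φ * 2^M := mul_le_mul_of_nonneg_right key (by positivity)
    _ = 2^M * 4^Φ := mul_comm _ _

end Aux

def pvfun (Φ : ℕ) (ks : ℤ) (d : Fin Φ → ℤ) : ℕ → ℤ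
  | 0 => ks
  | Nat.succ n => pvfun Φ ks d n + (if h : n < Φ then d ⟨n, h⟩ else 0)


/-- Lemma 6.5 / abstract percolation lemma: if the events `B_{i,k}` each
have probability at most `δ` and the families `{B_{i,k} : k}` are mutually independent for
indices `i` at pairwise distance at least `K`, then the probability that some sequence
`k ∈ 𝔎_{Φ,k_s,k_e}` with `τ₁(k) ≤ HΦ` collects at least `εΦ` of the events
`B_{i,k_{i−1}}` is at most `exp(−cΦ)`. -/
theorem statement6 (K : ℕ) (hK : 1 ≤ K) (H : ℝ) (hH : 0 < H) (ε : ℝ)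
    (hε0 : 0 < ε) (hε1 : ε < 1) :
    ∃ δ c : ℝ, 0 < δ ∧ 0 < c ∧
      ∀ (Φ : ℕ), 1 ≤ Φ →
      ∀ (Ω : Type*) [MeasurableSpace Ω] (μ : Measure Ω) [IsProbabilityMeasure μ],
      ∀ (B : ℕ → ℤ → Set Ω),
        (∀ i k, MeasurableSet (B i k)) →
        (∀ i ∈ Finset.Icc 1 Φ, ∀ k : ℤ, μ (B i k) ≤ ENNReal.ofReal δ) →
        (∀ I : Finset ℕ, I ⊆ Finset.Icc 1 Φ →
          (∀ i ∈ I, ∀ i' ∈ I, i ≠ i' → (K : ℤ) ≤ |(i : ℤ) - (i' : ℤ)|) →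
          iIndep (fun i : I =>
            MeasurableSpace.generateFrom {s : Set Ω | ∃ k : ℤ, s = B (i : ℕ) k}) μ) →
      ∀ ks ke : ℤ,
        μ {ω | ∃ k : ℕ → ℤ, k 0 = ks ∧ k Φ = ke ∧
            ((∑ i ∈ Finset.Icc 1 Φ, |k i - k (i - 1)| : ℤ) : ℝ) ≤ H * Φ ∧
            ε * Φ ≤ ∑ i ∈ Finset.Icc 1 Φ,
              (B i (k (i - 1))).indicator (fun _ => (1 : ℝ)) ω} ≤
          ENNReal.ofReal (Real.exp (-c * Φ)) := by
  have hlog2 : (0:ℝ) < Real.log 2 := Real.log_pos (by norm_num)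
  have haK : (0:ℝ) < K := by exact_mod_cast hK
  set a : ℝ := K/ε * ((H+3)*Real.log 2 + 1) with ha
  have ha0 : 0 < a := mul_pos (div_pos haK hε0) (by positivity)
  refine ⟨Real.exp (-a), 1, Real.exp_pos _, one_pos, ?_⟩
  intro Φ hΦ Ω mΩ μ hμprob B hBmeas hBδ hBind ks ke
  classical
  set M := ⌊H*Φ⌋₊ with hMdef
  set m := ⌈ε*Φ/K⌉₊ with hmdef
  set box : Finset (Fin Φ → ℤ) :=
    Fintype.piFinset fun _ => Finset.Icc (-(M:ℤ)) (M:ℤ) with hbox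
  set D : Finset (Fin Φ → ℤ) := box.filter (fun d => (∑ j, (d j).natAbs) ≤ M) with hDdef
  set 𝒮 : Finset (Finset ℕ) := (Finset.Icc 1 Φ).powerset.filter
    (fun S => S.card = m ∧ ∀ i ∈ S, ∀ i' ∈ S, i ≠ i' → (K:ℤ) ≤ |(i:ℤ) - (i':ℤ)|) with hSdef
  set A : (Fin Φ → ℤ) × Finset ℕ → Set Ω :=
    (fun p => ⋂ i ∈ p.2, B i (pvfun Φ ks p.1 (i-1))) with hAdef
  -- covering
  have cover : {ω | ∃ k : ℕ → ℤ, k 0 = ks ∧ k Φ = ke ∧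
      ((∑ i ∈ Finset.Icc 1 Φ, |k i - k (i - 1)| : ℤ) : ℝ) ≤ H * Φ ∧
      ε * Φ ≤ ∑ i ∈ Finset.Icc 1 Φ,
        (B i (k (i - 1))).indicator (fun _ => (1 : ℝ)) ω} ⊆ ⋃ p ∈ D ×ˢ 𝒮, A p := by
    rintro ω ⟨k, hk0, hkΦ, hτ, hsum⟩
    set d : Fin Φ → ℤ := fun j => k ((j:ℕ)+1) - k j with hddef
    have hsum_eq : ∑ i ∈ Finset.Icc 1 Φ, |k i - k (i-1)| = ∑ j : Fin Φ, |d j| := by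
      rw [show Finset.Icc 1 Φ = Finset.Ico 1 (Φ+1) from (Finset.Ico_add_one_right_eq_Icc 1 Φ).symm,
        Finset.sum_Ico_eq_sum_range]
      simp only [Nat.add_sub_cancel]
      rw [← Fin.sum_univ_eq_sum_range (fun j => |k (1+j) - k (1+j-1)|) Φ]
      apply Finset.sum_congr rfl
      intro j _
      have h2 : 1 + (j:ℕ) - 1 = (j:ℕ) := by omega
      have h1 : 1 + (j:ℕ) = (j:ℕ) + 1 := by omega
      rw [h2, h1]
      all_goals simp [hddef]
    have hd_sum : ∑ j, (d j).natAbs ≤ M := by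
      apply Nat.le_floor
      have h2 : ((∑ j, (d j).natAbs : ℕ) : ℤ) = ∑ j, |d j| := by
        rw [Nat.cast_sum]
        exact Finset.sum_congr rfl fun j _ => Int.natCast_natAbs _
      have hint : ((∑ j, (d j).natAbs : ℕ) : ℤ) = ∑ i ∈ Finset.Icc 1 Φ, |k i - k (i-1)| :=
        h2.trans hsum_eq.symm
      calc ((∑ j, (d j).natAbs : ℕ) : ℝ)
          = ((∑ i ∈ Finset.Icc 1 Φ, |k i - k (i-1)| : ℤ) : ℝ) := by
            rw [← hint]; simp only [Int.cast_natCast]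
        _ ≤ H*Φ := hτ
    have hd_box : d ∈ box := by
      rw [hbox, Fintype.mem_piFinset]
      intro j
      have hj : (d j).natAbs ≤ M := le_trans
        (Finset.single_le_sum (f := fun j => (d j).natAbs) (fun _ _ => Nat.zero_le _)
          (Finset.mem_univ j)) hd_sum
      rw [Finset.mem_Icc]
      omega
    have hpv : ∀ n, n ≤ Φ → pvfun Φ ks d n = k n := by
      intro n
      induction n with
      | zero => intro _; simp [pvfun, hk0]
      | succ n ih =>
        intro hn
        have hn' : n < Φ := by omega
        have ihn := ih (by omega)
        simp only [pvfun, dif_pos hn', ihn, hddef]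
        rw [hddef] at ihn
        omega
    set T := (Finset.Icc 1 Φ).filter (fun i => ω ∈ B i (k (i-1))) with hTdef
    have heqT : ∑ i ∈ Finset.Icc 1 Φ, (B i (k (i-1))).indicator (fun _ => (1:ℝ)) ω
        = (T.card : ℝ) := by
      rw [hTdef, Finset.card_filter]
      push_cast
      apply Finset.sum_congr rfl
      intro i _
      simp [Set.indicator_apply]
    have hTcard : ε*Φ ≤ (T.card : ℝ) := by rw [← heqT]; exact hsum
    have hfib : ∑ r ∈ Finset.range K, ((T.filter (fun i => i % K = r)).card) = T.card :=
      (Finset.card_eq_sum_card_fiberwise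
        (fun i _ => Finset.mem_range.mpr (Nat.mod_lt i (by omega)))).symm
    have hex : ∃ r ∈ Finset.range K, T.card ≤ K * (T.filter (fun i => i % K = r)).card := by
      apply Finset.exists_le_of_sum_le ⟨0, Finset.mem_range.mpr (by omega)⟩
      rw [← Finset.mul_sum, hfib, Finset.sum_const, Finset.card_range, smul_eq_mul]
    obtain ⟨r, _, hr⟩ := hex
    have hmcard : m ≤ (T.filter (fun i => i % K = r)).card := by
      rw [hmdef]
      apply Nat.ceil_le.mpr
      rw [div_le_iff₀ haK]
      calc ε*Φ ≤ (T.card : ℝ) := hTcard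
        _ ≤ ((K * (T.filter (fun i => i % K = r)).card : ℕ) : ℝ) := by exact_mod_cast hr
        _ = ((T.filter (fun i => i % K = r)).card : ℝ) * K := by push_cast; ring
    obtain ⟨S, hSsub, hScard⟩ := Finset.exists_subset_card_eq hmcard
    have hSIcc : S ⊆ Finset.Icc 1 Φ :=
      (hSsub.trans (Finset.filter_subset _ _)).trans (Finset.filter_subset _ _)
    have hsep : ∀ i ∈ S, ∀ i' ∈ S, i ≠ i' → (K:ℤ) ≤ |(i:ℤ) - (i':ℤ)| := by
      intro i hi i' hi' hne
      have h1 : i % K = r := (Finset.mem_filter.mp (hSsub hi)).2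
      have h2 : i' % K = r := (Finset.mem_filter.mp (hSsub hi')).2
      have hmod : Nat.ModEq K i i' := h1.trans h2.symm
      have hdvd : (K:ℤ) ∣ ((i':ℤ) - (i:ℤ)) := hmod.dvd
      have hdvd' : (K:ℤ) ∣ ((i:ℤ) - (i':ℤ)) := by
        have := dvd_neg.mpr hdvd
        rwa [neg_sub] at this
      have hne' : (i:ℤ) - (i':ℤ) ≠ 0 := sub_ne_zero.mpr (by exact_mod_cast hne)
      exact Int.le_of_dvd (abs_pos.mpr hne') ((dvd_abs _ _).mpr hdvd')
    have hmem : (d, S) ∈ D ×ˢ 𝒮 := by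
      rw [Finset.mem_product]
      constructor
      · rw [hDdef, Finset.mem_filter]; exact ⟨hd_box, hd_sum⟩
      · rw [hSdef, Finset.mem_filter, Finset.mem_powerset]
        exact ⟨hSIcc, hScard, hsep⟩
    apply Set.mem_biUnion hmem
    rw [hAdef]
    simp only [Set.mem_iInter]
    intro i hi
    have hiT : i ∈ T := Finset.filter_subset _ _ (hSsub hi)
    have hω : ω ∈ B i (k (i-1)) := (Finset.mem_filter.mp hiT).2
    have hiΦ : i ≤ Φ := (Finset.mem_Icc.mp (Finset.mem_filter.mp hiT).1).2
    rw [hpv (i-1) (by omega)]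
    exact hω
  -- per-piece bound
  have hpiece : ∀ p ∈ D ×ˢ 𝒮, μ (A p) ≤ ENNReal.ofReal (Real.exp (-a)) ^ m := by
    rintro ⟨d, S⟩ hp
    rw [Finset.mem_product] at hp
    obtain ⟨hpD, hpS⟩ := hp
    rw [hSdef, Finset.mem_filter, Finset.mem_powerset] at hpS
    obtain ⟨hS1, hS2, hS3⟩ := hpS
    have hiind := hBind S hS1 hS3
    have heq := hiind.meas_iInter (s := fun i : S => B (i:ℕ) (pvfun Φ ks d ((i:ℕ)-1)))
      (fun i => MeasurableSpace.measurableSet_generateFrom ⟨pvfun Φ ks d ((i:ℕ)-1), rfl⟩)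
    have hAeq : A (d,S) = ⋂ i : S, B (i:ℕ) (pvfun Φ ks d ((i:ℕ)-1)) := by
      rw [hAdef]
      ext x
      simp [Set.mem_iInter, Subtype.forall]
    rw [hAeq, heq]
    calc ∏ i : S, μ (B (i:ℕ) (pvfun Φ ks d ((i:ℕ)-1)))
        ≤ ∏ _i : S, ENNReal.ofReal (Real.exp (-a)) :=
          Finset.prod_le_prod' (fun i _ => hBδ i (hS1 i.2) _)
      _ = ENNReal.ofReal (Real.exp (-a)) ^ m := by
          rw [Finset.prod_const, Finset.card_univ, Fintype.card_coe, hS2]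
  -- counting and final numeric bound
  have hScount : (𝒮.card : ℝ) ≤ 2^Φ := by
    have h1 : 𝒮.card ≤ 2^Φ := by
      calc 𝒮.card ≤ (Finset.Icc 1 Φ).powerset.card := Finset.card_filter_le _ _
        _ = 2^Φ := by rw [Finset.card_powerset, Nat.card_Icc]; norm_num
    exact_mod_cast h1
  have hDcount : (D.card : ℝ) ≤ 2^M * 4^Φ := aux_countD Φ M
  have hmlb : (ε*Φ/K : ℝ) ≤ m := Nat.le_ceil _
  have hMub : (M:ℝ) ≤ H*Φ := Nat.floor_le (by positivity)
  have hreal : (((D ×ˢ 𝒮).card : ℕ) : ℝ) * (Real.exp (-a))^m ≤ Real.exp (-1*Φ) := by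
    have hcard : (((D ×ˢ 𝒮).card : ℕ) : ℝ) = (D.card : ℝ) * (𝒮.card : ℝ) := by
      rw [Finset.card_product]; push_cast; ring
    have hexp2M : (2:ℝ)^M = Real.exp (M * Real.log 2) := by
      rw [Real.exp_nat_mul, Real.exp_log (by norm_num : (0:ℝ) < 2)]
    have hexp4 : (4:ℝ)^Φ = Real.exp (Φ * (2 * Real.log 2)) := by
      rw [Real.exp_nat_mul]
      congr 1
      rw [show Real.exp (2 * Real.log 2) = Real.exp (Real.log 2) ^ (2:ℕ) by
        rw [← Real.exp_nat_mul]; norm_num]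
      rw [Real.exp_log (by norm_num : (0:ℝ) < 2)]; norm_num
    have hexp2 : (2:ℝ)^Φ = Real.exp (Φ * Real.log 2) := by
      rw [Real.exp_nat_mul, Real.exp_log (by norm_num : (0:ℝ) < 2)]
    have hexpδ : (Real.exp (-a))^m = Real.exp (m * (-a)) := (Real.exp_nat_mul _ _).symm
    have hae : (ε*Φ/K) * a = Φ*((H+3)*Real.log 2 + 1) := by
      rw [ha]; field_simp
    calc (((D ×ˢ 𝒮).card : ℕ) : ℝ) * (Real.exp (-a))^m
        ≤ ((2^M * 4^Φ) * 2^Φ) * (Real.exp (-a))^m := by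
          rw [hcard]
          apply mul_le_mul_of_nonneg_right _ (by positivity)
          calc (D.card : ℝ) * (𝒮.card : ℝ) ≤ (2^M * 4^Φ) * (𝒮.card : ℝ) :=
                mul_le_mul_of_nonneg_right hDcount (by positivity)
            _ ≤ (2^M * 4^Φ) * 2^Φ := mul_le_mul_of_nonneg_left hScount (by positivity)
      _ = Real.exp (M * Real.log 2 + Φ * (2 * Real.log 2) + Φ * Real.log 2 + m * (-a)) := by
          rw [hexp2M, hexp4, hexp2, hexpδ, ← Real.exp_add, ← Real.exp_add, ← Real.exp_add]
      _ ≤ Real.exp (-1*Φ) := by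
          apply Real.exp_le_exp.mpr
          have h1 : (M:ℝ) * Real.log 2 ≤ (H*Φ) * Real.log 2 :=
            mul_le_mul_of_nonneg_right hMub (le_of_lt hlog2)
          have h2 : (m:ℝ) * (-a) ≤ (ε*Φ/K) * (-a) := by
            nlinarith [mul_le_mul_of_nonneg_right hmlb (le_of_lt ha0)]
          have h3 : (ε*Φ/K) * (-a) = -(Φ*((H+3)*Real.log 2 + 1)) := by
            rw [← hae]; ring
          nlinarith
  -- assembly
  calc μ {ω | ∃ k : ℕ → ℤ, k 0 = ks ∧ k Φ = ke ∧
            ((∑ i ∈ Finset.Icc 1 Φ, |k i - k (i - 1)| : ℤ) : ℝ) ≤ H * Φ ∧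
            ε * Φ ≤ ∑ i ∈ Finset.Icc 1 Φ,
              (B i (k (i - 1))).indicator (fun _ => (1 : ℝ)) ω}
      ≤ μ (⋃ p ∈ D ×ˢ 𝒮, A p) := measure_mono cover
    _ ≤ ∑ p ∈ D ×ˢ 𝒮, μ (A p) := measure_biUnion_finset_le _ _
    _ ≤ ∑ _p ∈ D ×ˢ 𝒮, ENNReal.ofReal (Real.exp (-a)) ^ m := Finset.sum_le_sum hpiece
    _ = (((D ×ˢ 𝒮).card : ℕ) : ENNReal) * ENNReal.ofReal (Real.exp (-a)) ^ m := by
        rw [Finset.sum_const, nsmul_eq_mul]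
    _ ≤ ENNReal.ofReal (Real.exp (-1*Φ)) := by
        rw [← ENNReal.ofReal_pow (le_of_lt (Real.exp_pos _)),
          ← ENNReal.ofReal_natCast ((D ×ˢ 𝒮).card),
          ← ENNReal.ofReal_mul (by positivity)]
        exact ENNReal.ofReal_le_ofReal hreal
end

section
/- For any integers i₁ < i₂ there exist an integer m ≥ 1 and a sequence of integers i₁ = j₀ < j₁ < j₂ < ⋯ < j_m = i₂ satisfying the following properties: (1) for each h ∈ {1,…,m}, the difference j_h − j_{h−1} equals 2^{k(h)} for some integer k(h) ≥ 0, and both j_{h−1} and j_h are integer multiples of 2^{k(h)}; (2) for each integer k ≥ 0 there exist at most two different values of h with k(h) = k; (3) if i₂ − i₁ ≥ 2^{k+1} for some integer k ≥ 0, then there exists h with j_h − j_{h−1} ≥ 2^k. -/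
/-- Invariant for the dyadic decomposition: the required properties of statement 7, plus
bookkeeping needed for the induction: every increment `2^k` has an endpoint divisible by
`2^(k+1)` (which classifies it as "ascending" or "descending"), there is at most one
ascending and at most one descending increment of each size, and ascending (resp.
descending) increments of size `2^k` exist only if `2^(k+1)` does not divide `a`
(resp. `b`). -/
def DyInv (a b : ℤ) (m : ℕ) (j : ℕ → ℤ) (kexp : ℕ → ℕ) : Prop :=
  1 ≤ m ∧ j 0 = a ∧ j m = b ∧
  (∀ h', h' < m → j h' < j (h' + 1)) ∧
  (∀ h' ∈ Finset.Icc 1 m,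
      j h' - j (h' - 1) = 2 ^ kexp h' ∧
      ((2:ℤ) ^ kexp h' ∣ j (h' - 1)) ∧ ((2:ℤ) ^ kexp h' ∣ j h')) ∧
  (∀ h' ∈ Finset.Icc 1 m,
      (2:ℤ) ^ (kexp h' + 1) ∣ j h' ∨ (2:ℤ) ^ (kexp h' + 1) ∣ j (h' - 1)) ∧
  (∀ h1 ∈ Finset.Icc 1 m, ∀ h2 ∈ Finset.Icc 1 m, kexp h1 = kexp h2 →
      (2:ℤ) ^ (kexp h1 + 1) ∣ j h1 → (2:ℤ) ^ (kexp h2 + 1) ∣ j h2 → h1 = h2) ∧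
  (∀ h1 ∈ Finset.Icc 1 m, ∀ h2 ∈ Finset.Icc 1 m, kexp h1 = kexp h2 →
      (2:ℤ) ^ (kexp h1 + 1) ∣ j (h1 - 1) → (2:ℤ) ^ (kexp h2 + 1) ∣ j (h2 - 1) → h1 = h2) ∧
  (∀ h' ∈ Finset.Icc 1 m, (2:ℤ) ^ (kexp h' + 1) ∣ j h' → ¬ (2:ℤ) ^ (kexp h' + 1) ∣ a) ∧
  (∀ h' ∈ Finset.Icc 1 m, (2:ℤ) ^ (kexp h' + 1) ∣ j (h' - 1) → ¬ (2:ℤ) ^ (kexp h' + 1) ∣ b)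

lemma dyinv_base (a : ℤ) :
    DyInv a (a+1) 1 (fun i => if i = 0 then a else a+1) (fun _ => 0) := by
  refine ⟨le_refl 1, rfl, rfl, ?_, ?_, ?_, ?_, ?_, ?_, ?_⟩
  · intro h' hh'
    interval_cases h'
    simp
  · intro h' hh'
    simp only [Finset.mem_Icc] at hh'
    have : h' = 1 := by omega
    subst this
    norm_num
  · intro h' hh'
    simp only [Finset.mem_Icc] at hh'
    have : h' = 1 := by omega
    subst this
    simp only [pow_one]
    norm_num
    omega
  · intro h1 hh1 h2 hh2 _ _ _
    simp only [Finset.mem_Icc] at hh1 hh2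
    omega
  · intro h1 hh1 h2 hh2 _ _ _
    simp only [Finset.mem_Icc] at hh1 hh2
    omega
  · intro h' hh' hd
    simp only [Finset.mem_Icc] at hh'
    have : h' = 1 := by omega
    subst this
    simp only [pow_one] at hd ⊢
    norm_num at hd ⊢
    omega
  · intro h' hh' hd
    simp only [Finset.mem_Icc] at hh'
    have : h' = 1 := by omega
    subst this
    simp only [pow_one] at hd ⊢
    norm_num at hd ⊢
    omega

lemma dyinv_prepend (a b : ℤ) (ha : ¬ (2:ℤ) ∣ a) (m : ℕ) (j : ℕ → ℤ) (kexp : ℕ → ℕ)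
    (H : DyInv (a+1) b m j kexp) :
    DyInv a b (m+1) (fun i => if i = 0 then a else j (i-1))
      (fun i => if i ≤ 1 then 0 else kexp (i-1)) := by
  obtain ⟨Hm, H0, Hb, Hmono, Hstep, HB, HU, HD, HDa, HDb⟩ := H
  have hodd : ∀ k : ℕ, ¬ (2:ℤ) ^ (k + 1) ∣ a := by
    intro k hk
    exact ha (dvd_trans (dvd_pow_self 2 (Nat.succ_ne_zero k)) hk)
  refine ⟨by omega, rfl, ?_, ?_, ?_, ?_, ?_, ?_, ?_, ?_⟩
  · simp [Nat.add_sub_cancel, Hb]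
  · intro h' hh'
    rcases Nat.eq_zero_or_pos h' with rfl | hpos
    · simp [H0]
    · have h1 : h' ≠ 0 := by omega
      have h2 : h' + 1 ≠ 0 := by omega
      simp only [h1, h2, ite_false, if_neg]
      have : h' + 1 - 1 = (h' - 1) + 1 := by omega
      rw [this]
      exact Hmono (h' - 1) (by omega)
  · intro h' hh'
    simp only [Finset.mem_Icc] at hh'
    rcases eq_or_lt_of_le hh'.1 with h1 | h1
    · subst h1
      norm_num [H0]
    · have e2 : h' ≠ 0 := by omega
      have e3 : ¬ h' ≤ 1 := by omega
      have e4 : h' - 1 ≠ 0 := by omega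
      simp only [e2, e3, e4, ite_false, if_neg]
      exact Hstep (h' - 1) (by simp only [Finset.mem_Icc]; omega)
  · intro h' hh'
    simp only [Finset.mem_Icc] at hh'
    rcases eq_or_lt_of_le hh'.1 with h1 | h1
    · subst h1
      left
      norm_num [H0]
      omega
    · have e2 : h' ≠ 0 := by omega
      have e3 : ¬ h' ≤ 1 := by omega
      have e4 : h' - 1 ≠ 0 := by omega
      simp only [e2, e3, e4, ite_false, if_neg]
      exact HB (h' - 1) (by simp only [Finset.mem_Icc]; omega)
  · intro h1 hm1 h2 hm2 heq hd1 hd2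
    simp only [Finset.mem_Icc] at hm1 hm2
    rcases eq_or_lt_of_le hm1.1 with e1 | e1 <;> rcases eq_or_lt_of_le hm2.1 with e2 | e2
    · omega
    · exfalso
      subst e1
      have f2 : h2 ≠ 0 := by omega
      have f3 : ¬ h2 ≤ 1 := by omega
      simp only [f2, f3, ite_false, if_neg] at hd2 heq
      simp only [le_refl, if_pos, one_ne_zero, ite_false, if_neg] at hd1 heq
      rw [H0] at hd1
      have := HDa (h2 - 1) (by simp only [Finset.mem_Icc]; omega) hd2
      rw [← heq] at this
      exact this hd1
    · exfalso
      subst e2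
      have f2 : h1 ≠ 0 := by omega
      have f3 : ¬ h1 ≤ 1 := by omega
      simp only [f2, f3, ite_false, if_neg] at hd1 heq
      simp only [le_refl, if_pos, one_ne_zero, ite_false, if_neg] at hd2 heq
      rw [H0] at hd2
      have := HDa (h1 - 1) (by simp only [Finset.mem_Icc]; omega) hd1
      rw [heq] at this
      exact this hd2
    · have f2 : h1 ≠ 0 := by omega
      have f3 : ¬ h1 ≤ 1 := by omega
      have g2 : h2 ≠ 0 := by omega
      have g3 : ¬ h2 ≤ 1 := by omega
      simp only [f2, f3, g2, g3, ite_false, if_neg] at hd1 hd2 heq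
      have := HU (h1 - 1) (by simp only [Finset.mem_Icc]; omega)
        (h2 - 1) (by simp only [Finset.mem_Icc]; omega) heq hd1 hd2
      omega
  · intro h1 hm1 h2 hm2 heq hd1 hd2
    simp only [Finset.mem_Icc] at hm1 hm2
    rcases eq_or_lt_of_le hm1.1 with e1 | e1 <;> rcases eq_or_lt_of_le hm2.1 with e2 | e2
    · omega
    · exfalso
      subst e1
      simp only [le_refl, if_pos, Nat.sub_self, if_pos, ite_true] at hd1
      exact hodd 0 hd1
    · exfalso
      subst e2
      simp only [le_refl, if_pos, Nat.sub_self, if_pos, ite_true] at hd2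
      exact hodd 0 hd2
    · have f2 : h1 ≠ 0 := by omega
      have f3 : ¬ h1 ≤ 1 := by omega
      have f4 : h1 - 1 ≠ 0 := by omega
      have g2 : h2 ≠ 0 := by omega
      have g3 : ¬ h2 ≤ 1 := by omega
      have g4 : h2 - 1 ≠ 0 := by omega
      simp only [f2, f3, f4, g2, g3, g4, ite_false, if_neg] at hd1 hd2 heq
      have := HD (h1 - 1) (by simp only [Finset.mem_Icc]; omega)
        (h2 - 1) (by simp only [Finset.mem_Icc]; omega) heq hd1 hd2
      omega
  · intro h' hh' _
    exact hodd _
  · intro h' hh' hd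
    simp only [Finset.mem_Icc] at hh'
    rcases eq_or_lt_of_le hh'.1 with e1 | e1
    · exfalso
      subst e1
      simp only [le_refl, if_pos, Nat.sub_self, ite_true] at hd
      exact hodd 0 hd
    · have f2 : h' ≠ 0 := by omega
      have f3 : ¬ h' ≤ 1 := by omega
      have f4 : h' - 1 ≠ 0 := by omega
      simp only [f2, f3, f4, ite_false, if_neg] at hd ⊢
      exact HDb (h' - 1) (by simp only [Finset.mem_Icc]; omega) hd

lemma dyinv_append (a b : ℤ) (hb : ¬ (2:ℤ) ∣ b) (m : ℕ) (j : ℕ → ℤ) (kexp : ℕ → ℕ)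
    (H : DyInv a (b-1) m j kexp) :
    DyInv a b (m+1) (fun i => if i ≤ m then j i else b)
      (fun i => if i ≤ m then kexp i else 0) := by
  obtain ⟨Hm, H0, Hb, Hmono, Hstep, HB, HU, HD, HDa, HDb⟩ := H
  have hodd : ∀ k : ℕ, ¬ (2:ℤ) ^ (k + 1) ∣ b := by
    intro k hk
    exact hb (dvd_trans (dvd_pow_self 2 (Nat.succ_ne_zero k)) hk)
  refine ⟨by omega, by simp [Nat.zero_le, H0], by simp, ?_, ?_, ?_, ?_, ?_, ?_, ?_⟩
  · intro h' hh'
    rcases Nat.lt_or_ge h' m with hlt | hge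
    · have e1 : h' ≤ m := by omega
      have e2 : h' + 1 ≤ m := by omega
      simp only [e1, e2, if_pos, ite_true]
      exact Hmono h' hlt
    · have e1 : h' = m := by omega
      subst e1
      have e2 : ¬ h' + 1 ≤ h' := by omega
      simp only [le_refl, ite_true, e2, ite_false, Hb]
      omega
  · intro h' hh'
    simp only [Finset.mem_Icc] at hh'
    rcases Nat.lt_or_ge h' (m+1) with hlt | hge
    · have e1 : h' ≤ m := by omega
      have e2 : h' - 1 ≤ m := by omega
      simp only [e1, e2, if_pos, ite_true]
      exact Hstep h' (by simp only [Finset.mem_Icc]; omega)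
    · have e1 : h' = m + 1 := by omega
      subst e1
      have e2 : ¬ m + 1 ≤ m := by omega
      have e3 : m + 1 - 1 = m := by omega
      simp only [e2, ite_false, e3, le_refl, ite_true, Hb]
      norm_num
  · intro h' hh'
    simp only [Finset.mem_Icc] at hh'
    rcases Nat.lt_or_ge h' (m+1) with hlt | hge
    · have e1 : h' ≤ m := by omega
      have e2 : h' - 1 ≤ m := by omega
      simp only [e1, e2, if_pos, ite_true]
      exact HB h' (by simp only [Finset.mem_Icc]; omega)
    · have e1 : h' = m + 1 := by omega
      subst e1
      have e2 : ¬ m + 1 ≤ m := by omega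
      have e3 : m + 1 - 1 = m := by omega
      right
      simp only [e2, ite_false, e3, le_refl, ite_true, Hb, pow_one]
      omega
  · intro h1 hm1 h2 hm2 heq hd1 hd2
    simp only [Finset.mem_Icc] at hm1 hm2
    rcases Nat.lt_or_ge h1 (m+1) with f1 | f1 <;> rcases Nat.lt_or_ge h2 (m+1) with g1 | g1
    · have e1 : h1 ≤ m := by omega
      have e2 : h2 ≤ m := by omega
      simp only [e1, e2, if_pos, ite_true] at heq hd1 hd2
      exact HU h1 (by simp only [Finset.mem_Icc]; omega)
        h2 (by simp only [Finset.mem_Icc]; omega) heq hd1 hd2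
    · exfalso
      have e2 : h2 = m + 1 := by omega
      subst e2
      have f2 : ¬ m + 1 ≤ m := by omega
      simp only [f2, ite_false] at hd2
      exact hodd 0 hd2
    · exfalso
      have e1 : h1 = m + 1 := by omega
      subst e1
      have f2 : ¬ m + 1 ≤ m := by omega
      simp only [f2, ite_false] at hd1
      exact hodd 0 hd1
    · omega
  · intro h1 hm1 h2 hm2 heq hd1 hd2
    simp only [Finset.mem_Icc] at hm1 hm2
    rcases Nat.lt_or_ge h1 (m+1) with f1 | f1 <;> rcases Nat.lt_or_ge h2 (m+1) with g1 | g1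
    · have e1 : h1 ≤ m := by omega
      have e2 : h2 ≤ m := by omega
      have e3 : h1 - 1 ≤ m := by omega
      have e4 : h2 - 1 ≤ m := by omega
      simp only [e1, e2, e3, e4, if_pos, ite_true] at heq hd1 hd2
      exact HD h1 (by simp only [Finset.mem_Icc]; omega)
        h2 (by simp only [Finset.mem_Icc]; omega) heq hd1 hd2
    · exfalso
      have e2 : h2 = m + 1 := by omega
      subst e2
      have e1 : h1 ≤ m := by omega
      have e3 : h1 - 1 ≤ m := by omega
      have f2 : ¬ m + 1 ≤ m := by omega
      have f3 : m + 1 - 1 = m := by omega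
      simp only [e1, e3, f2, f3, le_refl, ite_true, ite_false] at heq hd1 hd2
      rw [Hb] at hd2
      have := HDb h1 (by simp only [Finset.mem_Icc]; omega) hd1
      rw [heq] at this
      exact this hd2
    · exfalso
      have e1 : h1 = m + 1 := by omega
      subst e1
      have e2 : h2 ≤ m := by omega
      have e4 : h2 - 1 ≤ m := by omega
      have f2 : ¬ m + 1 ≤ m := by omega
      have f3 : m + 1 - 1 = m := by omega
      simp only [e2, e4, f2, f3, le_refl, ite_true, ite_false] at heq hd1 hd2
      rw [Hb] at hd1
      have := HDb h2 (by simp only [Finset.mem_Icc]; omega) hd2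
      rw [← heq] at this
      exact this hd1
    · omega
  · intro h' hh' hd
    simp only [Finset.mem_Icc] at hh'
    rcases Nat.lt_or_ge h' (m+1) with f1 | f1
    · have e1 : h' ≤ m := by omega
      simp only [e1, if_pos, ite_true] at hd ⊢
      exact HDa h' (by simp only [Finset.mem_Icc]; omega) hd
    · exfalso
      have e1 : h' = m + 1 := by omega
      subst e1
      have f2 : ¬ m + 1 ≤ m := by omega
      simp only [f2, ite_false] at hd
      exact hodd 0 hd
  · intro h' hh' _
    exact hodd _

lemma dyinv_scale (a b : ℤ) (m : ℕ) (j : ℕ → ℤ) (kexp : ℕ → ℕ)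
    (H : DyInv a b m j kexp) :
    DyInv (2*a) (2*b) m (fun i => 2 * j i) (fun i => kexp i + 1) := by
  obtain ⟨Hm, H0, Hb, Hmono, Hstep, HB, HU, HD, HDa, HDb⟩ := H
  have key : ∀ (k : ℕ) (x : ℤ), (2:ℤ) ^ (k + 1) ∣ 2 * x ↔ (2:ℤ) ^ k ∣ x := by
    intro k x
    rw [pow_succ, mul_comm ((2:ℤ)^k) 2]
    exact mul_dvd_mul_iff_left (two_ne_zero)
  refine ⟨Hm, by simp [H0], by simp [Hb], ?_, ?_, ?_, ?_, ?_, ?_, ?_⟩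
  · intro h' hh'
    simpa using Hmono h' hh'
  · intro h' hh'
    obtain ⟨s1, s2, s3⟩ := Hstep h' hh'
    refine ⟨?_, ?_, ?_⟩
    · simp only []
      rw [pow_succ, mul_comm ((2:ℤ)^(kexp h')) 2, ← s1]
      ring
    · simpa [key] using s2
    · simpa [key] using s3
  · intro h' hh'
    rcases HB h' hh' with hu | hd
    · left; simpa [key] using hu
    · right; simpa [key] using hd
  · intro h1 hm1 h2 hm2 heq hd1 hd2
    simp only [key] at hd1 hd2
    have heq' : kexp h1 = kexp h2 := by simpa using heq
    exact HU h1 hm1 h2 hm2 heq' hd1 hd2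
  · intro h1 hm1 h2 hm2 heq hd1 hd2
    simp only [key] at hd1 hd2
    have heq' : kexp h1 = kexp h2 := by simpa using heq
    exact HD h1 hm1 h2 hm2 heq' hd1 hd2
  · intro h' hh' hd
    simp only [key] at hd ⊢
    exact HDa h' hh' hd
  · intro h' hh' hd
    simp only [key] at hd ⊢
    exact HDb h' hh' hd

lemma dyinv_exists : ∀ n : ℕ, ∀ a b : ℤ, a < b → (b - a).toNat = n →
    ∃ m j kexp, DyInv a b m j kexp := by
  intro n
  induction n using Nat.strong_induction_on with
  | _ n IH =>
    intro a b hab hn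
    by_cases hb1 : b = a + 1
    · subst hb1
      exact ⟨1, _, _, dyinv_base a⟩
    · by_cases ha2 : (2:ℤ) ∣ a
      · by_cases hb2 : (2:ℤ) ∣ b
        · obtain ⟨a', rfl⟩ := ha2
          obtain ⟨b', rfl⟩ := hb2
          have hlt : a' < b' := by omega
          have hm : (b' - a').toNat < n := by omega
          obtain ⟨m, j, kexp, H⟩ := IH _ hm a' b' hlt rfl
          exact ⟨m, _, _, dyinv_scale a' b' m j kexp H⟩
        · have hlt : a < b - 1 := by omega
          have hm : (b - 1 - a).toNat < n := by omega
          obtain ⟨m, j, kexp, H⟩ := IH _ hm a (b-1) hlt rfl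
          exact ⟨m+1, _, _, dyinv_append a b hb2 m j kexp H⟩
      · have hlt : a + 1 < b := by omega
        have hm : (b - (a+1)).toNat < n := by omega
        obtain ⟨m, j, kexp, H⟩ := IH _ hm (a+1) b hlt rfl
        exact ⟨m+1, _, _, dyinv_prepend a b ha2 m j kexp H⟩

lemma dytele (j : ℕ → ℤ) (m : ℕ) :
    ∑ h ∈ Finset.Icc 1 m, (j h - j (h-1)) = j m - j 0 := by
  induction m with
  | zero => simp
  | succ k ih =>
    rw [Finset.sum_Icc_succ_top (by omega : 1 ≤ k + 1), ih]
    simp only [Nat.add_sub_cancel]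
    ring

lemma dygeo (k : ℕ) : ∑ y ∈ Finset.range k, (2:ℤ) * 2^y = 2^(k+1) - 2 := by
  induction k with
  | zero => simp
  | succ n ih =>
    rw [Finset.sum_range_succ, ih]
    ring

/-- Lemma 8.12, dyadic sequence decomposition: for any integers
`i₁ < i₂` there is a strictly increasing sequence `i₁ = j₀ < j₁ < ⋯ < j_m = i₂` such that
each increment `j_h − j_{h−1}` is a power of two `2^{k(h)}` dividing both endpoints,
each power of two occurs at most twice as an increment, and if `i₂ − i₁ ≥ 2^{k+1}` then
some increment is at least `2^k`. -/
theorem statement7 (i₁ i₂ : ℤ) (h : i₁ < i₂) :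
    ∃ (m : ℕ) (j : ℕ → ℤ) (kexp : ℕ → ℕ),
      1 ≤ m ∧ j 0 = i₁ ∧ j m = i₂ ∧
      (∀ h', h' < m → j h' < j (h' + 1)) ∧
      (∀ h' ∈ Finset.Icc 1 m,
        j h' - j (h' - 1) = 2 ^ kexp h' ∧
        ((2 : ℤ) ^ kexp h' ∣ j (h' - 1)) ∧ ((2 : ℤ) ^ kexp h' ∣ j h')) ∧
      (∀ k : ℕ, ((Finset.Icc 1 m).filter fun h' => kexp h' = k).card ≤ 2) ∧
      (∀ k : ℕ, (2 : ℤ) ^ (k + 1) ≤ i₂ - i₁ →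
        ∃ h' ∈ Finset.Icc 1 m, (2 : ℤ) ^ k ≤ j h' - j (h' - 1)) := by
  obtain ⟨m, j, kexp, Hm, H0, Hb, Hmono, Hstep, HB, HU, HD, HDa, HDb⟩ :=
    dyinv_exists (i₂ - i₁).toNat i₁ i₂ h rfl
  have hcount : ∀ k : ℕ, ((Finset.Icc 1 m).filter fun h' => kexp h' = k).card ≤ 2 := by
    intro k
    by_contra hc
    push_neg at hc
    rw [Finset.two_lt_card_iff] at hc
    obtain ⟨x, y, z, hx, hy, hz, hxy, hxz, hyz⟩ := hc
    simp only [Finset.mem_filter] at hx hy hz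
    rcases HB x hx.1 with ux | dx <;> rcases HB y hy.1 with uy | dy <;>
      rcases HB z hz.1 with uz | dz
    · exact hxy (HU x hx.1 y hy.1 (by rw [hx.2, hy.2]) ux uy)
    · exact hxy (HU x hx.1 y hy.1 (by rw [hx.2, hy.2]) ux uy)
    · exact hxz (HU x hx.1 z hz.1 (by rw [hx.2, hz.2]) ux uz)
    · exact hyz (HD y hy.1 z hz.1 (by rw [hy.2, hz.2]) dy dz)
    · exact hyz (HU y hy.1 z hz.1 (by rw [hy.2, hz.2]) uy uz)
    · exact hxz (HD x hx.1 z hz.1 (by rw [hx.2, hz.2]) dx dz)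
    · exact hxy (HD x hx.1 y hy.1 (by rw [hx.2, hy.2]) dx dy)
    · exact hxy (HD x hx.1 y hy.1 (by rw [hx.2, hy.2]) dx dy)
  refine ⟨m, j, kexp, Hm, H0, Hb, Hmono, Hstep, hcount, ?_⟩
  intro k hk
  by_contra hc
  push_neg at hc
  have hkx : ∀ h' ∈ Finset.Icc 1 m, kexp h' < k := by
    intro h' hh'
    by_contra hge
    push_neg at hge
    have h1 := (Hstep h' hh').1
    have h2 := hc h' hh'
    rw [h1] at h2
    have h3 : (2:ℤ)^k ≤ 2^(kexp h') := pow_le_pow_right₀ (by norm_num) hge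
    linarith
  have hsum : ∑ h' ∈ Finset.Icc 1 m, (2:ℤ)^(kexp h') = i₂ - i₁ := by
    have ht := dytele j m
    rw [H0, Hb] at ht
    rw [← ht]
    exact Finset.sum_congr rfl fun x hx => ((Hstep x hx).1).symm
  have hfib := Finset.sum_fiberwise_of_maps_to
    (fun x hx => Finset.mem_range.2 (hkx x hx)) (fun h' => (2:ℤ)^(kexp h'))
  have hbound : ∑ y ∈ Finset.range k,
      ∑ x ∈ (Finset.Icc 1 m).filter (fun x => kexp x = y), (2:ℤ)^(kexp x)
      ≤ ∑ y ∈ Finset.range k, (2:ℤ) * 2^y := by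
    apply Finset.sum_le_sum
    intro y _
    have he : ∑ x ∈ (Finset.Icc 1 m).filter (fun x => kexp x = y), (2:ℤ)^(kexp x)
        = (((Finset.Icc 1 m).filter (fun x => kexp x = y)).card : ℤ) * (2:ℤ)^y := by
      rw [Finset.sum_congr rfl (fun x hx => by rw [(Finset.mem_filter.1 hx).2])]
      rw [Finset.sum_const, nsmul_eq_mul]
    rw [he]
    have h2 := hcount y
    have h2' : ((((Finset.Icc 1 m).filter fun x => kexp x = y)).card : ℤ) ≤ 2 := by
      exact_mod_cast h2
    have hp : (0:ℤ) ≤ 2^y := by positivity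
    exact mul_le_mul_of_nonneg_right h2' hp
  rw [hfib, hsum] at hbound
  rw [dygeo] at hbound
  linarith
end

section
/- Let Ω be a standard Borel space with σ-algebra ℱ and let μ be a probability measure on (Ω, ℱ). Let S₁, …, S_m ∈ ℱ be pairwise disjoint sets, and for each j ∈ {1,…,m} let ℋ_j ⊆ ℱ be a sub-σ-algebra with S_j ∈ ℋ_j, and let κ_j be a regular conditional distribution for μ given ℋ_j (i.e., κ_j is a Markov kernel such that for every B ∈ ℱ, the map ω ↦ κ_j(ω, B) is an ℋ_j-measurable version of the conditional probability μ[B ∣ ℋ_j]). Define a kernel T on Ω by T(ω, ·) = κ_j(ω, ·) if ω ∈ S_j for some j, and T(ω, ·) = δ_ω (the Dirac mass at ω) if ω ∉ ∪_{j=1}^m S_j. Then the pair (first coordinate, resampled coordinate) is exchangeable: for all A, B ∈ ℱ, ∫_A T(ω, B) dμ(ω) = ∫_B T(ω, A) dμ(ω). -/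
open MeasureTheory ProbabilityTheory
open scoped ENNReal

lemma key_aux {Ω : Type*} [mΩ : MeasurableSpace Ω] (μ : Measure Ω)
    (κ : Kernel Ω Ω) [IsMarkovKernel κ] (ℋ : MeasurableSpace Ω) (hle : ℋ ≤ mΩ)
    (hmeas : ∀ B : Set Ω, MeasurableSet[mΩ] B → Measurable[ℋ] fun ω => κ ω B)
    (hcond : ∀ B : Set Ω, MeasurableSet[mΩ] B → ∀ C : Set Ω, MeasurableSet[ℋ] C →
      ∫⁻ ω in C, κ ω B ∂μ = μ (B ∩ C))
    (S : Set Ω) (hS : MeasurableSet[ℋ] S)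
    (A B : Set Ω) (hA : MeasurableSet[mΩ] A) (hB : MeasurableSet[mΩ] B) :
    ∫⁻ ω in S ∩ A, κ ω B ∂μ = ∫⁻ ω in S, κ ω A * κ ω B ∂μ := by
  have hSm : MeasurableSet[mΩ] S := hle _ hS
  set f : Ω → ℝ≥0∞ := S.indicator (fun ω => κ ω B) with hf_def
  have hf : Measurable[ℋ] f := Measurable.indicator (hmeas B hB) hS
  have hfm : Measurable[mΩ] f := hf.mono hle le_rfl
  have hνeq : (μ.restrict A).trim hle = (μ.withDensity (fun ω => κ ω A)).trim hle := by
    refine Measure.ext fun s hs => ?_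
    rw [trim_measurableSet_eq hle hs, trim_measurableSet_eq hle hs,
      Measure.restrict_apply (hle _ hs), withDensity_apply _ (hle _ hs),
      hcond A hA s hs, Set.inter_comm]
  have hgm : Measurable[mΩ] fun ω => κ ω A := (hmeas A hA).mono hle le_rfl
  calc ∫⁻ ω in S ∩ A, κ ω B ∂μ
      = ∫⁻ ω in A, f ω ∂μ := by
        rw [hf_def, lintegral_indicator hSm _, Measure.restrict_restrict hSm]
    _ = ∫⁻ ω, f ω ∂((μ.restrict A).trim hle) := (lintegral_trim hle hf).symm
    _ = ∫⁻ ω, f ω ∂((μ.withDensity (fun ω => κ ω A)).trim hle) := by rw [hνeq]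
    _ = ∫⁻ ω, f ω ∂(μ.withDensity (fun ω => κ ω A)) := lintegral_trim hle hf
    _ = ∫⁻ ω, κ ω A * f ω ∂μ := by
        rw [lintegral_withDensity_eq_lintegral_mul _ hgm hfm]; rfl
    _ = ∫⁻ ω in S, κ ω A * κ ω B ∂μ := by
        have : (fun ω => κ ω A * f ω) = S.indicator (fun ω => κ ω A * κ ω B) := by
          funext ω
          by_cases hω : ω ∈ S <;> simp [hf_def, hω]
        rw [this, lintegral_indicator hSm _]

lemma decomp_aux {Ω : Type*} [mΩ : MeasurableSpace Ω]
    (μ : Measure Ω)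
    (m : ℕ) (S : Fin m → Set Ω) (hSdisj : Pairwise (Function.onFun Disjoint S))
    (hSm : ∀ j, MeasurableSet (S j))
    (κ : Fin m → Kernel Ω Ω)
    (T : Ω → Measure Ω)
    (hT1 : ∀ j, ∀ ω ∈ S j, T ω = κ j ω)
    (hT2 : ∀ ω, ω ∉ ⋃ j, S j → T ω = Measure.dirac ω)
    (A B : Set Ω) (hA : MeasurableSet A) (hB : MeasurableSet B) :
    ∫⁻ ω in A, T ω B ∂μ =
      (∑ j, ∫⁻ ω in S j ∩ A, κ j ω B ∂μ) + μ (B ∩ (A \ ⋃ j, S j)) := by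
  set U : Set Ω := ⋃ j, S j with hU_def
  have hU : MeasurableSet U := MeasurableSet.iUnion hSm
  have hsplit : μ.restrict A = μ.restrict (A ∩ U) + μ.restrict (A \ U) := by
    conv_lhs => rw [← Set.inter_union_diff A U]
    exact Measure.restrict_union (Set.disjoint_sdiff_right.mono_left Set.inter_subset_right)
      (hA.diff hU)
  have hinter : A ∩ U = ⋃ j, S j ∩ A := by
    rw [hU_def, Set.inter_iUnion]
    exact Set.iUnion_congr fun j => Set.inter_comm _ _
  have hres : μ.restrict (A ∩ U) = Measure.sum fun j => μ.restrict (S j ∩ A) := by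
    rw [hinter]
    exact Measure.restrict_iUnion
      (fun i j hij => ((hSdisj hij).mono Set.inter_subset_left Set.inter_subset_left))
      (fun j => (hSm j).inter hA)
  rw [hsplit, lintegral_add_measure, hres, lintegral_sum_measure, tsum_fintype]
  congr 1
  · refine Finset.sum_congr rfl fun j _ => ?_
    refine lintegral_congr_ae (((ae_restrict_iff' ((hSm j).inter hA)).2 (ae_of_all _ ?_)))
    intro ω hω
    show T ω B = κ j ω B
    rw [hT1 j ω hω.1]
  · have h1 : ∀ ω ∈ A \ U, T ω B = B.indicator 1 ω := by
      intro ω hω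
      rw [hT2 ω hω.2, Measure.dirac_apply' ω hB]
    calc ∫⁻ ω in A \ U, T ω B ∂μ
        = ∫⁻ ω in A \ U, B.indicator 1 ω ∂μ :=
          lintegral_congr_ae ((ae_restrict_iff' (hA.diff hU)).2 (ae_of_all _ h1))
      _ = μ (B ∩ (A \ U)) := by
          rw [lintegral_indicator_one hB, Measure.restrict_apply hB]

/-- Lemma 8.1, exchangeability of the resampling operator: let
`S₁, …, S_m` be pairwise disjoint sets with `S_j` measurable for the sub-σ-algebra `ℋ_j`,
and let `κ_j` be a regular conditional distribution for `μ` given `ℋ_j`.  If `T` resamples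
according to `κ_j` on `S_j` and does nothing (Dirac mass) outside `⋃ S_j`, then the pair
(original configuration, resampled configuration) is exchangeable:
`∫_A T(ω, B) dμ(ω) = ∫_B T(ω, A) dμ(ω)` for all measurable `A`, `B`. -/
theorem statement8 {Ω : Type*} [mΩ : MeasurableSpace Ω] [StandardBorelSpace Ω]
    (μ : Measure Ω) [IsProbabilityMeasure μ]
    (m : ℕ) (S : Fin m → Set Ω) (hSdisj : Pairwise (Function.onFun Disjoint S))
    (ℋ : Fin m → MeasurableSpace Ω) (hle : ∀ j, ℋ j ≤ mΩ)
    (hS : ∀ j, MeasurableSet[ℋ j] (S j))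
    (κ : Fin m → Kernel Ω Ω) (hκ : ∀ j, IsMarkovKernel (κ j))
    (hκmeas : ∀ j (B : Set Ω), MeasurableSet B → Measurable[ℋ j] fun ω => κ j ω B)
    (hκcond : ∀ j (B : Set Ω), MeasurableSet B → ∀ C : Set Ω, MeasurableSet[ℋ j] C →
      ∫⁻ ω in C, κ j ω B ∂μ = μ (B ∩ C))
    (T : Ω → Measure Ω)
    (hT1 : ∀ j, ∀ ω ∈ S j, T ω = κ j ω)
    (hT2 : ∀ ω, ω ∉ ⋃ j, S j → T ω = Measure.dirac ω)
    (A B : Set Ω) (hA : MeasurableSet A) (hB : MeasurableSet B) :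
    ∫⁻ ω in A, T ω B ∂μ = ∫⁻ ω in B, T ω A ∂μ := by
  have hSm : ∀ j, MeasurableSet (S j) := fun j => hle j _ (hS j)
  haveI : ∀ j, IsMarkovKernel (κ j) := hκ
  rw [decomp_aux μ m S hSdisj hSm κ T hT1 hT2 A B hA hB,
    decomp_aux μ m S hSdisj hSm κ T hT1 hT2 B A hB hA]
  congr 1
  · refine Finset.sum_congr rfl fun j _ => ?_
    rw [key_aux μ (κ j) (ℋ j) (hle j) (hκmeas j) (hκcond j) (S j) (hS j) A B hA hB,
      key_aux μ (κ j) (ℋ j) (hle j) (hκmeas j) (hκcond j) (S j) (hS j) B A hB hA]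
    exact lintegral_congr fun ω => mul_comm _ _
  · congr 1
    ext x
    simp only [Set.mem_inter_iff, Set.mem_diff]
    tauto
end

section
/- Let Φ ≥ 1 and L ≥ 0 be integers and let δ₀ ∈ [0,1]. For each ℓ ∈ {0, …, L−1} let G_ℓ be a set of positive integers, and assume that for every ℓ ∈ {0, …, L−1} and every integer k ≥ 1, the number of integers s with (k−1)Φ < s ≤ kΦ and s ∈ G_ℓ is at least δ₀Φ. Then for every ℓ ∈ {0, …, L} and every integer k ≥ 1, the number of integers i with (k−1)Φ^ℓ < i ≤ kΦ^ℓ for which there exists ℓ' ∈ {0, …, ℓ−1} with ⌈i / Φ^{ℓ'}⌉ ∈ G_{ℓ'} is at least (1 − (1−δ₀)^ℓ) Φ^ℓ. -/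
/-- Ceiling division of natural numbers: `natCeilDiv a b = ⌈a / b⌉` for `b ≥ 1`. -/
def natCeilDiv (a b : ℕ) : ℕ := (a + b - 1) / b

private lemma natCeilDiv_le_iff {n i s : ℕ} (hn : 0 < n) :
    natCeilDiv i n ≤ s ↔ i ≤ s * n := by
  unfold natCeilDiv
  rw [Nat.div_le_iff_le_mul_add_pred hn]
  rw [mul_comm s n]
  omega

private lemma le_natCeilDiv_iff {n i s : ℕ} (hn : 0 < n) (hs : 1 ≤ s) (hi : 1 ≤ i) :
    s ≤ natCeilDiv i n ↔ (s - 1) * n < i := by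
  unfold natCeilDiv
  rw [Nat.le_div_iff_mul_le hn]
  obtain ⟨t, rfl⟩ : ∃ t, s = t + 1 := ⟨s - 1, by omega⟩
  simp only [add_mul, one_mul, Nat.add_sub_cancel]
  omega

private lemma natCeilDiv_eq {n i s : ℕ} (hn : 0 < n) (hs : 1 ≤ s)
    (h1 : (s - 1) * n < i) (h2 : i ≤ s * n) : natCeilDiv i n = s := by
  have hi : 1 ≤ i := by omega
  have := (le_natCeilDiv_iff hn hs hi).2 h1
  have := (natCeilDiv_le_iff hn).2 h2
  omega

private lemma natCeilDiv_spec {n i : ℕ} (hn : 0 < n) (hi : 1 ≤ i) :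
    (natCeilDiv i n - 1) * n < i ∧ i ≤ natCeilDiv i n * n := by
  have h1 : 1 ≤ natCeilDiv i n := by
    rw [le_natCeilDiv_iff hn le_rfl hi]; simpa using (show 0 < i by omega)
  exact ⟨(le_natCeilDiv_iff hn h1 hi).1 le_rfl, (natCeilDiv_le_iff hn).1 le_rfl⟩

private lemma ncard_eq_filter (a b : ℕ) (P : ℕ → Prop) [DecidablePred P] :
    {i : ℕ | a < i ∧ i ≤ b ∧ P i}.ncard = ((Finset.Ioc a b).filter P).card := by
  rw [← Set.ncard_coe_finset]
  congr 1
  ext i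
  simp [Finset.mem_Ioc, and_assoc]

/-- multiscale counting step in Lemma 4.1: if at every level
`ℓ < L` each block of `Φ` consecutive locations contains at least `δ₀Φ` good locations,
then in each block of `Φ^ℓ` consecutive locations at the bottom scale, at least
`(1 − (1−δ₀)^ℓ)Φ^ℓ` locations are covered by a good location at some level `ℓ' < ℓ`. -/
theorem statement9 (Φ L : ℕ) (hΦ : 1 ≤ Φ) (δ₀ : ℝ) (hδ0 : 0 ≤ δ₀) (hδ1 : δ₀ ≤ 1)
    (G : ℕ → Set ℕ)
    (hG : ∀ ℓ < L, ∀ k : ℕ, 1 ≤ k →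
      δ₀ * Φ ≤ ({s : ℕ | (k - 1) * Φ < s ∧ s ≤ k * Φ ∧ s ∈ G ℓ}.ncard : ℝ)) :
    ∀ ℓ ≤ L, ∀ k : ℕ, 1 ≤ k →
      (1 - (1 - δ₀) ^ ℓ) * (Φ : ℝ) ^ ℓ ≤
        ({i : ℕ | (k - 1) * Φ ^ ℓ < i ∧ i ≤ k * Φ ^ ℓ ∧
            ∃ ℓ' < ℓ, natCeilDiv i (Φ ^ ℓ') ∈ G ℓ'}.ncard : ℝ) := by
  classical
  intro ℓ
  induction ℓ with
  | zero =>
    intro _ k _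
    simp only [pow_zero, sub_self, zero_mul]
    exact Nat.cast_nonneg _
  | succ ℓ ih =>
    intro hL k hk
    have hℓL : ℓ < L := hL
    have hn : 0 < Φ ^ ℓ := pow_pos hΦ _
    set n := Φ ^ ℓ with hndef
    set c : ℝ := (1 - δ₀) ^ ℓ with hcdef
    have hc0 : 0 ≤ c := pow_nonneg (by linarith) _
    have hc1 : c ≤ 1 := pow_le_one₀ (by linarith) (by linarith)
    set P : ℕ → Prop := fun i => ∃ ℓ' < ℓ + 1, natCeilDiv i (Φ ^ ℓ') ∈ G ℓ' with hPdef
    set P' : ℕ → Prop := fun i => ∃ ℓ' < ℓ, natCeilDiv i (Φ ^ ℓ') ∈ G ℓ' with hP'def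
    rw [ncard_eq_filter _ _ P]
    -- block decomposition
    have hpow : ∀ m : ℕ, m * Φ ^ (ℓ + 1) = (m * Φ) * n := by
      intro m; rw [hndef, pow_succ]; ring
    have hunion : Finset.Ioc ((k - 1) * Φ ^ (ℓ + 1)) (k * Φ ^ (ℓ + 1)) =
        (Finset.Ioc ((k - 1) * Φ) (k * Φ)).biUnion
          (fun s => Finset.Ioc ((s - 1) * n) (s * n)) := by
      ext i
      simp only [Finset.mem_Ioc, Finset.mem_biUnion, hpow]
      constructor
      · rintro ⟨h1, h2⟩
        have hi : 1 ≤ i := by omega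
        obtain ⟨hspec1, hspec2⟩ := natCeilDiv_spec hn hi (i := i)
        refine ⟨natCeilDiv i n, ⟨?_, ?_⟩, hspec1, hspec2⟩
        · -- (k-1)*Φ < natCeilDiv i n
          by_contra hcon
          push_neg at hcon
          have hle : i ≤ ((k - 1) * Φ) * n :=
            le_trans hspec2 (Nat.mul_le_mul_right _ hcon)
          omega
        · exact (natCeilDiv_le_iff hn).2 h2
      · rintro ⟨s, ⟨hs1, hs2⟩, h1, h2⟩
        have hs0 : 1 ≤ s := by omega
        constructor
        · have : ((k - 1) * Φ) * n ≤ (s - 1) * n := Nat.mul_le_mul_right _ (by omega)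
          omega
        · exact h2.trans (Nat.mul_le_mul_right _ hs2)
    rw [hunion, Finset.filter_biUnion, Finset.card_biUnion]
    · -- main counting
      set T := Finset.Ioc ((k - 1) * Φ) (k * Φ) with hT
      have hTcard : T.card = Φ := by
        rw [hT, Nat.card_Ioc]
        have : (k - 1) * Φ + Φ = k * Φ := by
          obtain ⟨t, rfl⟩ : ∃ t, k = t + 1 := ⟨k - 1, by omega⟩
          simp [add_mul]
        omega
      set T1 := T.filter (fun s => s ∈ G ℓ) with hT1
      set T2 := T.filter (fun s => s ∉ G ℓ) with hT2
      have hsplit : T1.card + T2.card = Φ := by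
        rw [hT1, hT2, Finset.card_filter_add_card_filter_not, hTcard]
      have hT1card : δ₀ * Φ ≤ (T1.card : ℝ) := by
        have := hG ℓ hℓL k hk
        rwa [ncard_eq_filter _ _ (fun s => s ∈ G ℓ)] at this
      -- per-block lower bounds
      have hbound : ∀ s ∈ T,
          (if s ∈ G ℓ then ((Φ : ℝ) ^ ℓ) else (1 - c) * (Φ : ℝ) ^ ℓ) ≤
            ((((Finset.Ioc ((s - 1) * n) (s * n)).filter P).card : ℕ) : ℝ) := by
        intro s hs
        rw [hT, Finset.mem_Ioc] at hs
        have hs0 : 1 ≤ s := by omega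
        by_cases hsG : s ∈ G ℓ
        · simp only [hsG, if_true]
          have hfull : (Finset.Ioc ((s - 1) * n) (s * n)).filter P =
              Finset.Ioc ((s - 1) * n) (s * n) := by
            apply Finset.filter_true_of_mem
            intro i hi
            rw [Finset.mem_Ioc] at hi
            exact ⟨ℓ, Nat.lt_succ_self _, by
              rw [← hndef, natCeilDiv_eq hn hs0 hi.1 hi.2]; exact hsG⟩
          rw [hfull, Nat.card_Ioc]
          have h1 : s * n - (s - 1) * n = n := by
            obtain ⟨t, rfl⟩ : ∃ t, s = t + 1 := ⟨s - 1, by omega⟩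
            simp [add_mul]
          rw [h1, hndef]
          push_cast
          exact le_rfl
        · simp only [hsG, if_false]
          have hIH := ih (le_of_lt hℓL) s hs0
          rw [ncard_eq_filter _ _ P'] at hIH
          refine hIH.trans ?_
          have hsub : (Finset.Ioc ((s - 1) * n) (s * n)).filter P' ⊆
              (Finset.Ioc ((s - 1) * n) (s * n)).filter P := by
            apply Finset.monotone_filter_right
            rintro i - ⟨ℓ', hℓ', hmem⟩
            exact ⟨ℓ', Nat.lt_succ_of_lt hℓ', hmem⟩
          exact_mod_cast Nat.cast_le.2 (Finset.card_le_card hsub)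
      -- sum it up
      have hsum : ∑ s ∈ T, (if s ∈ G ℓ then ((Φ : ℝ) ^ ℓ) else (1 - c) * (Φ : ℝ) ^ ℓ) ≤
          ((∑ s ∈ T, ((Finset.Ioc ((s - 1) * n) (s * n)).filter P).card : ℕ) : ℝ) := by
        push_cast
        exact Finset.sum_le_sum hbound
      refine le_trans ?_ hsum
      rw [Finset.sum_ite, Finset.sum_const, Finset.sum_const]
      simp only [nsmul_eq_mul]
      rw [← hT1, ← hT2]
      have hΦR : (0:ℝ) ≤ (Φ : ℝ) ^ ℓ := by positivity
      have hT2R : (T2.card : ℝ) = (Φ : ℝ) - (T1.card : ℝ) := by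
        have h : ((T1.card : ℝ) + (T2.card : ℝ)) = (Φ : ℝ) := by exact_mod_cast hsplit
        linarith
      rw [hT2R, hcdef]
      have hexp : (1 - (1 - δ₀) ^ (ℓ + 1)) * (Φ : ℝ) ^ (ℓ + 1) =
          (1 - (1 - δ₀) * (1 - δ₀) ^ ℓ) * ((Φ : ℝ) * (Φ : ℝ) ^ ℓ) := by
        ring
      rw [hexp]
      nlinarith [mul_nonneg hc0 hΦR, mul_le_mul_of_nonneg_right hT1card hΦR,
        mul_nonneg (mul_nonneg hc0 hΦR) (sub_nonneg.2 hδ1)]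
    · -- disjointness
      intro s hs t ht hst
      apply Finset.disjoint_filter_filter
      rw [Finset.disjoint_left]
      intro i hi hj
      rw [Finset.mem_Ioc] at hi hj
      rcases Nat.lt_or_ge s t with h | h
      · have : s * n ≤ (t - 1) * n := Nat.mul_le_mul_right _ (by omega)
        omega
      · have h' : t < s := lt_of_le_of_ne h (Ne.symm hst)
        have : t * n ≤ (s - 1) * n := Nat.mul_le_mul_right _ (by omega)
        omega
end

section
/- Let r ≥ 1 be an integer and let g be a real-valued function on pairs of integers (a, b) with 0 ≤ a ≤ b ≤ r, satisfying the triangle inequality g(a, c) ≤ g(a, b) + g(b, c) for all integers 0 ≤ a ≤ b ≤ c ≤ r. Let (ζ_k)_{k ≥ 0} be nonnegative reals, and suppose that for every integer k ≥ 0 and every integer a ≥ 0 divisible by 2^k with a + 2^k ≤ r, one has g(a, a + 2^k) ≤ 2^k + ζ_k. Then for all integers 0 ≤ a < b ≤ r, g(a, b) ≤ (b − a) + 2 Σ_{k=0}^{⌊log₂(b−a)⌋} ζ_k. -/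
/-- dyadic chaining bound, cf. the proof of Lemma 9.11: if `g`
satisfies the triangle inequality on `{0, …, r}` and `g(a, a + 2^k) ≤ 2^k + ζ_k`
whenever `2^k ∣ a` and `a + 2^k ≤ r`, then for all `0 ≤ a < b ≤ r`,
`g(a, b) ≤ (b − a) + 2 Σ_{k=0}^{⌊log₂(b−a)⌋} ζ_k`. -/
theorem statement11 (r : ℕ) (hr : 1 ≤ r) (g : ℕ → ℕ → ℝ)
    (htri : ∀ a b c : ℕ, a ≤ b → b ≤ c → c ≤ r → g a c ≤ g a b + g b c)
    (ζ : ℕ → ℝ) (hζ : ∀ k, 0 ≤ ζ k)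
    (hg : ∀ (k a : ℕ), 2 ^ k ∣ a → a + 2 ^ k ≤ r → g a (a + 2 ^ k) ≤ 2 ^ k + ζ k)
    (a b : ℕ) (hab : a < b) (hbr : b ≤ r) :
    g a b ≤ ((b : ℝ) - (a : ℝ)) + 2 * ∑ k ∈ Finset.range (Nat.log 2 (b - a) + 1), ζ k := by
  have hsum_mono : ∀ i j : ℕ, i ≤ j →
      ∑ k ∈ Finset.range i, ζ k ≤ ∑ k ∈ Finset.range j, ζ k := by
    intro i j hij
    exact Finset.sum_le_sum_of_subset_of_nonneg (Finset.range_subset_range.mpr hij)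
      (fun k _ _ => hζ k)
  -- ascending chaining from a dyadically aligned point
  have lemA : ∀ n, 1 ≤ n → ∀ a, a + n ≤ r → 2 ^ (Nat.log 2 n) ∣ a →
      g a (a + n) ≤ (n : ℝ) + ∑ k ∈ Finset.range (Nat.log 2 n + 1), ζ k := by
    intro n
    induction n using Nat.strong_induction_on with
    | _ n ih =>
      intro hn a har hdvd
      set j := Nat.log 2 n with hj
      have h2j : 2 ^ j ≤ n := Nat.pow_log_le_self 2 (by omega)
      have hlt : n < 2 ^ (j + 1) := Nat.lt_pow_succ_log_self (by norm_num) n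
      have hpow : (2:ℕ) ^ (j+1) = 2 ^ j + 2 ^ j := by ring
      set m := n - 2 ^ j with hm
      have hnm : n = 2 ^ j + m := by omega
      have hmlt : m < 2 ^ j := by omega
      have hstep : g a (a + 2 ^ j) ≤ 2 ^ j + ζ j := hg j a hdvd (by omega)
      have hζj : ζ j ≤ ∑ k ∈ Finset.range (j + 1), ζ k := by
        exact Finset.single_le_sum (fun k _ => hζ k) (Finset.self_mem_range_succ j)
      by_cases hm0 : m = 0
      · have hb : a + n = a + 2 ^ j := by omega
        rw [hb]
        have : (n : ℝ) = (2:ℝ) ^ j := by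
          rw [hnm, hm0]; push_cast; ring
        rw [this]
        calc g a (a + 2 ^ j) ≤ 2 ^ j + ζ j := hstep
          _ ≤ (2:ℝ) ^ j + ∑ k ∈ Finset.range (j + 1), ζ k := by linarith
      · have hjm : Nat.log 2 m < j := by
          have := Nat.log_lt_of_lt_pow hm0 hmlt
          omega
        have hdvd' : 2 ^ (Nat.log 2 m) ∣ (a + 2 ^ j) :=
          dvd_add (dvd_trans (pow_dvd_pow 2 hjm.le) hdvd) (pow_dvd_pow 2 hjm.le)
        have hrec := ih m (by omega) (by omega) (a + 2 ^ j) (by omega) hdvd'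
        have htri' := htri a (a + 2 ^ j) (a + 2 ^ j + m) (by omega) (by omega) (by omega)
        have hb : a + n = a + 2 ^ j + m := by omega
        rw [hb]
        have hsum : ∑ k ∈ Finset.range (Nat.log 2 m + 1), ζ k
            ≤ ∑ k ∈ Finset.range j, ζ k := hsum_mono _ _ (by omega)
        have hsplit : ∑ k ∈ Finset.range (j + 1), ζ k
            = ∑ k ∈ Finset.range j, ζ k + ζ j := Finset.sum_range_succ ζ j
        have hncast : (n : ℝ) = (2:ℝ) ^ j + (m : ℝ) := by rw [hnm]; push_cast; ring
        calc g a (a + 2 ^ j + m) ≤ g a (a + 2 ^ j) + g (a + 2 ^ j) (a + 2 ^ j + m) := htri'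
          _ ≤ (2 ^ j + ζ j) + ((m : ℝ) + ∑ k ∈ Finset.range (Nat.log 2 m + 1), ζ k) := by
              linarith
          _ ≤ (n : ℝ) + ∑ k ∈ Finset.range (j + 1), ζ k := by
              rw [hncast, hsplit]; linarith
  -- descending chaining to a dyadically aligned point
  have lemB : ∀ n, 1 ≤ n → ∀ a, a + n ≤ r → 2 ^ (Nat.log 2 n) ∣ (a + n) →
      g a (a + n) ≤ (n : ℝ) + ∑ k ∈ Finset.range (Nat.log 2 n + 1), ζ k := by
    intro n
    induction n using Nat.strong_induction_on with
    | _ n ih =>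
      intro hn a har hdvd
      set j := Nat.log 2 n with hj
      have h2j : 2 ^ j ≤ n := Nat.pow_log_le_self 2 (by omega)
      have hlt : n < 2 ^ (j + 1) := Nat.lt_pow_succ_log_self (by norm_num) n
      have hpow : (2:ℕ) ^ (j+1) = 2 ^ j + 2 ^ j := by ring
      set m := n - 2 ^ j with hm
      have hnm : n = 2 ^ j + m := by omega
      have hmlt : m < 2 ^ j := by omega
      have hdvdm : 2 ^ j ∣ (a + m) := by
        have h1 : a + n = (a + m) + 2 ^ j := by omega
        have := hdvd
        rw [h1] at this
        exact (Nat.dvd_add_right (dvd_refl (2 ^ j))).mp (by rwa [Nat.add_comm] at this)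
      have hstep : g (a + m) (a + m + 2 ^ j) ≤ 2 ^ j + ζ j :=
        hg j (a + m) hdvdm (by omega)
      have hζj : ζ j ≤ ∑ k ∈ Finset.range (j + 1), ζ k :=
        Finset.single_le_sum (fun k _ => hζ k) (Finset.self_mem_range_succ j)
      by_cases hm0 : m = 0
      · rw [show a + m = a from by omega] at hstep
        have hb : a + n = a + 2 ^ j := by omega
        rw [hb]
        have : (n : ℝ) = (2:ℝ) ^ j := by
          rw [hnm, hm0]; push_cast; ring
        rw [this]
        calc g a (a + 2 ^ j) ≤ 2 ^ j + ζ j := hstep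
          _ ≤ (2:ℝ) ^ j + ∑ k ∈ Finset.range (j + 1), ζ k := by linarith
      · have hjm : Nat.log 2 m < j := by
          have := Nat.log_lt_of_lt_pow hm0 hmlt
          omega
        have hdvd' : 2 ^ (Nat.log 2 m) ∣ (a + m) :=
          dvd_trans (pow_dvd_pow 2 hjm.le) hdvdm
        have hrec := ih m (by omega) (by omega) a (by omega) hdvd'
        have htri' := htri a (a + m) (a + m + 2 ^ j) (by omega) (by omega) (by omega)
        have hb : a + n = a + m + 2 ^ j := by omega
        rw [hb]
        have hsum : ∑ k ∈ Finset.range (Nat.log 2 m + 1), ζ k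
            ≤ ∑ k ∈ Finset.range j, ζ k := hsum_mono _ _ (by omega)
        have hsplit : ∑ k ∈ Finset.range (j + 1), ζ k
            = ∑ k ∈ Finset.range j, ζ k + ζ j := Finset.sum_range_succ ζ j
        have hncast : (n : ℝ) = (2:ℝ) ^ j + (m : ℝ) := by rw [hnm]; push_cast; ring
        calc g a (a + m + 2 ^ j) ≤ g a (a + m) + g (a + m) (a + m + 2 ^ j) := htri'
          _ ≤ ((m : ℝ) + ∑ k ∈ Finset.range (Nat.log 2 m + 1), ζ k) + (2 ^ j + ζ j) := by
              linarith
          _ ≤ (n : ℝ) + ∑ k ∈ Finset.range (j + 1), ζ k := by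
              rw [hncast, hsplit]; linarith
  -- main argument
  set n := b - a with hn
  have hn1 : 1 ≤ n := by omega
  set K := Nat.log 2 n with hK
  have h2K : 2 ^ K ≤ n := Nat.pow_log_le_self 2 (by omega)
  have hsumnn : (0:ℝ) ≤ ∑ k ∈ Finset.range (K + 1), ζ k :=
    Finset.sum_nonneg (fun k _ => hζ k)
  have hbsub : ((b:ℝ) - (a:ℝ)) = (n : ℝ) := by
    have : (n : ℝ) = (b : ℝ) - (a : ℝ) := by
      rw [hn]; push_cast [Nat.cast_sub hab.le]; ring
    linarith
  rw [hbsub]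
  by_cases hda : 2 ^ K ∣ a
  · have := lemA n hn1 a (by omega) hda
    have hb : a + n = b := by omega
    rw [hb] at this
    linarith
  · -- c : least multiple of 2^K strictly above a
    set c := 2 ^ K * (a / 2 ^ K + 1) with hc
    have hcd : 2 ^ K ∣ c := Dvd.intro _ rfl
    have hmod : a % 2 ^ K ≠ 0 := fun h => hda (Nat.dvd_of_mod_eq_zero h)
    have hmodlt : a % 2 ^ K < 2 ^ K := Nat.mod_lt _ (by positivity)
    have haeq : a = 2 ^ K * (a / 2 ^ K) + a % 2 ^ K := (Nat.div_add_mod a (2 ^ K)).symm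
    have hac : a < c := by
      rw [hc]
      calc a = 2 ^ K * (a / 2 ^ K) + a % 2 ^ K := haeq
        _ < 2 ^ K * (a / 2 ^ K) + 2 ^ K := by omega
        _ = 2 ^ K * (a / 2 ^ K + 1) := by ring
    have hca : c - a < 2 ^ K := by
      have : c = 2 ^ K * (a / 2 ^ K) + 2 ^ K := by rw [hc]; ring
      omega
    have hcb : c < b := by
      have : c ≤ a + 2 ^ K - 1 := by omega
      omega
    set d1 := c - a with hd1
    set d2 := b - c with hd2
    have hd1pos : 1 ≤ d1 := by omega
    have hd2pos : 1 ≤ d2 := by omega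
    -- g a c via lemB
    have hlogd1 : Nat.log 2 d1 < K := Nat.log_lt_of_lt_pow (by omega) (by omega)
    have hdvd1 : 2 ^ (Nat.log 2 d1) ∣ (a + d1) := by
      have : a + d1 = c := by omega
      rw [this]
      exact dvd_trans (pow_dvd_pow 2 hlogd1.le) hcd
    have hB := lemB d1 hd1pos a (by omega) hdvd1
    have hac' : a + d1 = c := by omega
    rw [hac'] at hB
    -- g c b via lemA
    have hlogd2 : Nat.log 2 d2 ≤ K := by
      rw [hK]
      exact Nat.log_mono_right (by omega)
    have hdvd2 : 2 ^ (Nat.log 2 d2) ∣ c :=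
      dvd_trans (pow_dvd_pow 2 hlogd2) hcd
    have hA := lemA d2 hd2pos c (by omega) hdvd2
    have hcb' : c + d2 = b := by omega
    rw [hcb'] at hA
    have htri' := htri a c b hac.le hcb.le hbr
    have hs1 : ∑ k ∈ Finset.range (Nat.log 2 d1 + 1), ζ k
        ≤ ∑ k ∈ Finset.range (K + 1), ζ k := hsum_mono _ _ (by omega)
    have hs2 : ∑ k ∈ Finset.range (Nat.log 2 d2 + 1), ζ k
        ≤ ∑ k ∈ Finset.range (K + 1), ζ k := hsum_mono _ _ (by omega)
    have hdd : (d1 : ℝ) + (d2 : ℝ) = (n : ℝ) := by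
      have : d1 + d2 = n := by omega
      push_cast [← this]; ring
    calc g a b ≤ g a c + g c b := htri'
      _ ≤ ((d1:ℝ) + ∑ k ∈ Finset.range (Nat.log 2 d1 + 1), ζ k)
          + ((d2:ℝ) + ∑ k ∈ Finset.range (Nat.log 2 d2 + 1), ζ k) := by linarith
      _ ≤ (n : ℝ) + 2 * ∑ k ∈ Finset.range (K + 1), ζ k := by linarith
end
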